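/- arXiv:2010.08646 — 9 statements merged into one kernel-verified Lean document; each statement's English description precedes it below -/
import Mathlib

section
/- Let S = {x_i} and T = {y_i} be strictly increasing sequences of positive integers such that y_1 = m, m divides each y_i, and x_i ≥ y_i for all i. Then for all n ≥ 1, the number of partitions of mn into parts from T is at least the number of partitions of mn into parts from S. -/
/-- Number of partitions of `n` all of whose parts satisfy `P`. -/
noncomputable def partCount (n : ℕ) (P : ℕ → Prop) : ℕ :=
  Nat.card {p : n.Partition // ∀ i ∈ p.parts, P i}

/-- `ρ(R; n)`: number of partitions of `n` with all parts in the set `R`. -/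
noncomputable def rho (R : Set ℕ) (n : ℕ) : ℕ := partCount n (· ∈ R)

/-- `q_d^{(a)}(n)`: partitions of `n` into parts ≥ `a`, distinct, with pairwise
differences at least `d`. -/
noncomputable def qpart (d a n : ℕ) : ℕ :=
  Nat.card {p : n.Partition //
    (∀ i ∈ p.parts, a ≤ i) ∧
    (∀ i : ℕ, p.parts.count i ≤ 1) ∧
    (∀ i ∈ p.parts, ∀ j ∈ p.parts, i ≠ j → d ≤ i - j ∨ d ≤ j - i)}

/-- `i ≡ ±b (mod d+3)`. -/
noncomputable def congMod (d b i : ℕ) : Prop :=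
  i % (d + 3) = b % (d + 3) ∨ (i + b) % (d + 3) = 0

/-- `Q_d^{(b)}(n)`: partitions of `n` into parts ≡ ±b (mod d+3). -/
noncomputable def Qfull (d b n : ℕ) : ℕ := partCount n (fun i => congMod d b i)

/-- `Q_d^{(b,-)}(n)`: as `Qfull`, excluding the part `d+3-b`. -/
noncomputable def Qdash (d b n : ℕ) : ℕ :=
  partCount n (fun i => congMod d b i ∧ i ≠ d + 3 - b)

/-- `Q_d^{(b,-,-)}(n)`: as `Qfull`, excluding the parts `b` and `d+3-b`. -/
noncomputable def Qddash (d b n : ℕ) : ℕ :=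
  partCount n (fun i => congMod d b i ∧ i ≠ b ∧ i ≠ d + 3 - b)

private lemma sum_map_le' {s : Multiset ℕ} {g : ℕ → ℕ} (h : ∀ a ∈ s, g a ≤ a) :
    (s.map g).sum ≤ s.sum := by
  induction s using Multiset.induction with
  | empty => simp
  | cons a s ih =>
    simp only [Multiset.map_cons, Multiset.sum_cons]
    exact Nat.add_le_add (h a (Multiset.mem_cons_self a s))
      (ih fun b hb => h b (Multiset.mem_cons_of_mem hb))

theorem stmt0 (m : ℕ) (hm : 0 < m) (x y : ℕ → ℕ)
    (hx : StrictMono x) (hy : StrictMono y)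
    (hxpos : ∀ i, 0 < x i) (hypos : ∀ i, 0 < y i)
    (hy0 : y 0 = m) (hdvd : ∀ i, m ∣ y i) (hle : ∀ i, y i ≤ x i) :
    ∀ n : ℕ, 1 ≤ n → rho (Set.range x) (m * n) ≤ rho (Set.range y) (m * n) := by
  intro n hn
  classical
  set N := m * n with hN
  set g : ℕ → ℕ := fun a => y (Function.invFun x a) with hgdef
  have hgx : ∀ i, g (x i) = y i := fun i => by
    simp [hgdef, Function.leftInverse_invFun hx.injective i]
  -- count lemma
  have count_map_lem : ∀ (s : Multiset ℕ), (∀ a ∈ s, a ∈ Set.range x) →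
      ∀ i, (s.map g).count (y i) = s.count (x i) := by
    intro s hs i
    rw [Multiset.count_map, Multiset.count_eq_card_filter_eq]
    congr 1
    apply Multiset.filter_congr
    intro a ha
    obtain ⟨j, rfl⟩ := hs a ha
    rw [hgx j]
    constructor
    · intro h; exact congrArg x (hy.injective h)
    · intro h; exact congrArg y (hx.injective h)
  have hyne : ∀ i, i ≠ 0 → y i ≠ m := by
    intro i hi
    have : y 0 < y i := hy (Nat.pos_of_ne_zero hi)
    omega
  -- recovery lemma
  have recover : ∀ (s t : Multiset ℕ) (k l : ℕ),
      (∀ a ∈ s, a ∈ Set.range x) → (∀ a ∈ t, a ∈ Set.range x) →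
      s.sum = t.sum →
      s.map g + Multiset.replicate k m = t.map g + Multiset.replicate l m →
      s = t := by
    intro s t k l hs ht hsum heq
    have hcount : ∀ v, v ≠ x 0 → s.count v = t.count v := by
      intro v hv
      by_cases hvr : v ∈ Set.range x
      · obtain ⟨i, rfl⟩ := hvr
        have hi0 : i ≠ 0 := fun h => hv (by rw [h])
        have hym : y i ≠ m := hyne i hi0
        have := congrArg (Multiset.count (y i)) heq
        simp only [Multiset.count_add, Multiset.count_replicate, if_neg (Ne.symm hym)] at this
        rw [count_map_lem s hs i, count_map_lem t ht i] at this
        simpa using this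
      · rw [Multiset.count_eq_zero_of_notMem (fun h => hvr (hs v h)),
          Multiset.count_eq_zero_of_notMem (fun h => hvr (ht v h))]
    -- filters away from x 0 agree
    have hfilter : s.filter (· ≠ x 0) = t.filter (· ≠ x 0) := by
      ext v
      rw [Multiset.count_filter, Multiset.count_filter]
      by_cases hv : v ≠ x 0
      · rw [if_pos hv, if_pos hv, hcount v hv]
      · rw [if_neg hv, if_neg hv]
    have hsplit : ∀ u : Multiset ℕ,
        u.sum = u.count (x 0) * x 0 + (u.filter (· ≠ x 0)).sum := by
      intro u
      conv_lhs => rw [← Multiset.filter_add_not (· = x 0) u]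
      rw [Multiset.sum_add, Multiset.filter_eq', Multiset.sum_replicate, smul_eq_mul]
    have hc0 : s.count (x 0) = t.count (x 0) := by
      have h1 := hsplit s
      have h2 := hsplit t
      rw [hsum, h2, hfilter] at h1
      have := hxpos 0
      exact Nat.eq_of_mul_eq_mul_right this (by omega)
    ext v
    by_cases hv : v = x 0
    · rw [hv]; exact hc0
    · exact hcount v hv
  -- define the map
  have himg : ∀ p : {p : N.Partition // ∀ i ∈ p.parts, i ∈ Set.range x},
      ∃ q : {p : N.Partition // ∀ i ∈ p.parts, i ∈ Set.range y},
      q.1.parts = (p.1.parts.map g) +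
        Multiset.replicate ((N - (p.1.parts.map g).sum) / m) m := by
    intro ⟨p, hp⟩
    have hle' : ∀ a ∈ p.parts, g a ≤ a := by
      intro a ha
      obtain ⟨i, rfl⟩ := hp a ha
      rw [hgx i]; exact hle i
    have hsumle : (p.parts.map g).sum ≤ N := by
      calc (p.parts.map g).sum ≤ p.parts.sum := sum_map_le' hle'
      _ = N := p.parts_sum
    have hdvds : m ∣ (p.parts.map g).sum := by
      apply Multiset.dvd_sum
      intro a ha
      obtain ⟨b, hb, rfl⟩ := Multiset.mem_map.mp ha
      obtain ⟨i, rfl⟩ := hp b hb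
      rw [hgx i]; exact hdvd i
    have hdvdrest : m ∣ (N - (p.parts.map g).sum) :=
      Nat.dvd_sub ⟨n, rfl⟩ hdvds
    refine ⟨⟨⟨(p.parts.map g) + Multiset.replicate ((N - (p.parts.map g).sum) / m) m,
      ?_, ?_⟩, ?_⟩, rfl⟩
    · intro i hi
      rcases Multiset.mem_add.mp hi with h | h
      · obtain ⟨b, hb, rfl⟩ := Multiset.mem_map.mp h
        obtain ⟨j, rfl⟩ := hp b hb
        rw [hgx j]; exact hypos j
      · rw [Multiset.eq_of_mem_replicate h]; exact hm
    · rw [Multiset.sum_add, Multiset.sum_replicate, smul_eq_mul,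
        Nat.div_mul_cancel hdvdrest]
      omega
    · intro i hi
      rcases Multiset.mem_add.mp hi with h | h
      · obtain ⟨b, hb, rfl⟩ := Multiset.mem_map.mp h
        obtain ⟨j, rfl⟩ := hp b hb
        rw [hgx j]; exact ⟨j, rfl⟩
      · rw [Multiset.eq_of_mem_replicate h]; exact ⟨0, hy0⟩
  choose F hF using himg
  have hFinj : Function.Injective F := by
    intro p q hpq
    have h1 := hF p
    have h2 := hF q
    rw [hpq, h2] at h1
    have hst : p.1.parts = q.1.parts :=
      recover _ _ _ _ p.2 q.2 (by rw [p.1.parts_sum, q.1.parts_sum]) h1.symm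
    exact Subtype.ext (Nat.Partition.ext hst)
  exact Nat.card_le_card_of_injective F hFinj
end

section
/- Let S = {x_i} and T = {y_i} be strictly increasing sequences of positive integers such that y_1 = 1 and x_i ≥ y_i for all i. Then for all n > 0, the number of partitions of n into parts from T is at least the number of partitions of n into parts from S. -/
theorem stmt1 (x y : ℕ → ℕ)
    (hx : StrictMono x) (hy : StrictMono y)
    (hxpos : ∀ i, 0 < x i) (hypos : ∀ i, 0 < y i)
    (hy0 : y 0 = 1) (hle : ∀ i, y i ≤ x i) :
    ∀ n : ℕ, 0 < n → rho (Set.range x) n ≤ rho (Set.range y) n := by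
  classical
  intro n _
  set f : ℕ → ℕ := fun a => y (Function.invFun x a) with hf
  set g : ℕ → ℕ := fun b => x (Function.invFun y b) with hg
  have hxinj := hx.injective
  have hyinj := hy.injective
  have hfx : ∀ i, f (x i) = y i := fun i => by
    simp only [hf]; rw [Function.leftInverse_invFun hxinj i]
  have hgy : ∀ i, g (y i) = x i := fun i => by
    simp only [hg]; rw [Function.leftInverse_invFun hyinj i]
  have hgf : ∀ a ∈ Set.range x, g (f a) = a := by
    rintro _ ⟨i, rfl⟩; rw [hfx, hgy]
  have hfle : ∀ a ∈ Set.range x, f a ≤ a := by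
    rintro _ ⟨i, rfl⟩; rw [hfx]; exact hle i
  have hfpos : ∀ a, 0 < f a := fun a => hypos _
  have hf1 : ∀ a ∈ Set.range x, (f a = 1 ↔ a = x 0) := by
    rintro _ ⟨i, rfl⟩
    rw [hfx]
    constructor
    · intro h; exact congrArg x (hyinj (h.trans hy0.symm))
    · intro h; rw [hxinj h, hy0]
  -- the image multiset construction
  have hsum : ∀ p : n.Partition, (∀ i ∈ p.parts, i ∈ Set.range x) →
      (p.parts.map f).sum ≤ n := by
    intro p hp
    have := Multiset.sum_map_le_sum_map (s := p.parts) f id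
      (fun i hi => hfle i (hp i hi))
    simpa [p.parts_sum] using this
  -- define the injection
  refine Nat.card_le_card_of_injective (fun p => ⟨⟨(p.1.parts.map f) +
    Multiset.replicate (n - (p.1.parts.map f).sum) 1, ?_, ?_⟩, ?_⟩) ?_
  · -- positivity
    intro i hi
    rcases Multiset.mem_add.mp hi with h | h
    · obtain ⟨a, -, rfl⟩ := Multiset.mem_map.mp h
      exact hfpos a
    · rw [Multiset.eq_of_mem_replicate h]; exact one_pos
  · -- sum
    rw [Multiset.sum_add, Multiset.sum_replicate, smul_eq_mul, mul_one]
    exact Nat.add_sub_cancel' (hsum p.1 p.2)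
  · -- all parts in range y
    intro i hi
    rcases Multiset.mem_add.mp hi with h | h
    · obtain ⟨a, -, rfl⟩ := Multiset.mem_map.mp h
      exact ⟨_, rfl⟩
    · rw [Multiset.eq_of_mem_replicate h]; exact ⟨0, hy0⟩
  · -- injectivity
    rintro ⟨p, hp⟩ ⟨q, hq⟩ hpq
    have hparts : (p.parts.map f) + Multiset.replicate (n - (p.parts.map f).sum) 1
        = (q.parts.map f) + Multiset.replicate (n - (q.parts.map f).sum) 1 := by
      have := congrArg (fun r => (Subtype.val r).parts) hpq
      simpa using this
    -- filter out the 1's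
    have key : ∀ (m : Multiset ℕ), (∀ i ∈ m, i ∈ Set.range x) → ∀ k : ℕ,
        Multiset.filter (fun b => b ≠ 1) (m.map f + Multiset.replicate k 1)
        = (Multiset.filter (fun a => a ≠ x 0) m).map f := by
      intro m hm k
      rw [Multiset.filter_add, Multiset.filter_map]
      have h1 : Multiset.filter (fun b => b ≠ 1) (Multiset.replicate k 1) = 0 := by
        rw [Multiset.filter_eq_nil]
        intro a ha
        rw [Multiset.eq_of_mem_replicate ha]; simp
      rw [h1, add_zero]
      congr 1
      apply Multiset.filter_congr
      intro a ha
      simp only [Function.comp]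
      exact not_congr (hf1 a (hm a ha))
    have hfilter : (Multiset.filter (fun a => a ≠ x 0) p.parts).map f
        = (Multiset.filter (fun a => a ≠ x 0) q.parts).map f := by
      rw [← key p.parts hp _, ← key q.parts hq _, hparts]
    -- unmap with g
    have hunmap : ∀ (m : Multiset ℕ), (∀ i ∈ m, i ∈ Set.range x) →
        ((Multiset.filter (fun a => a ≠ x 0) m).map f).map g
        = Multiset.filter (fun a => a ≠ x 0) m := by
      intro m hm
      rw [Multiset.map_map]
      refine (Multiset.map_congr rfl ?_).trans (Multiset.map_id _)
      intro a ha
      exact hgf a (hm a (Multiset.mem_of_mem_filter ha))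
    have hfil : Multiset.filter (fun a => a ≠ x 0) p.parts
        = Multiset.filter (fun a => a ≠ x 0) q.parts := by
      rw [← hunmap p.parts hp, ← hunmap q.parts hq, hfilter]
    -- recover the count of x 0 from the sum
    have hdecomp : ∀ (m : Multiset ℕ),
        m = Multiset.filter (fun a => a ≠ x 0) m
          + Multiset.replicate (Multiset.count (x 0) m) (x 0) := by
      intro m
      conv_lhs => rw [← Multiset.filter_add_not (fun a => a ≠ x 0) m]
      congr 1
      rw [← Multiset.filter_eq']
      apply Multiset.filter_congr
      intro a _
      simp
    have hsum' : (Multiset.filter (fun a => a ≠ x 0) p.parts).sum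
          + Multiset.count (x 0) p.parts * x 0
        = (Multiset.filter (fun a => a ≠ x 0) q.parts).sum
          + Multiset.count (x 0) q.parts * x 0 := by
      have h1 := p.parts_sum
      have h2 := q.parts_sum
      rw [hdecomp p.parts] at h1
      rw [hdecomp q.parts] at h2
      rw [Multiset.sum_add, Multiset.sum_replicate, smul_eq_mul] at h1 h2
      rw [h1, h2]
    rw [hfil] at hsum'
    have hcount : Multiset.count (x 0) p.parts = Multiset.count (x 0) q.parts :=
      Nat.eq_of_mul_eq_mul_right (hxpos 0) (Nat.add_left_cancel hsum')
    apply Subtype.ext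
    apply Nat.Partition.ext
    rw [hdecomp p.parts, hdecomp q.parts, hfil, hcount]
end

section
/- Let a, d ≥ 1 and n ≥ d + 2a. Then q_d^{(a)}(n) ≥ q_{⌈d/a⌉}^{(1)}(⌈n/a⌉). -/
theorem List.eq_of_forall₂_le_of_sum_le {M : Type*} [AddCommMonoid M] [PartialOrder M]
    [IsOrderedCancelAddMonoid M] {l₁ l₂ : List M} (h : List.Forall₂ (· ≤ ·) l₁ l₂)
    (hs : l₂.sum ≤ l₁.sum) : l₁ = l₂ := by
  induction h with
  | nil => rfl
  | @cons a b l l' hab hl ih =>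
    rw [List.sum_cons, List.sum_cons] at hs
    have hba : b ≤ a := le_of_add_le_add_right (hs.trans (by gcongr; exact hl.sum_le_sum))
    obtain rfl := le_antisymm hab hba
    rw [ih (le_of_add_le_add_left hs)]

theorem List.eq_of_length_eq_of_tail_eq_of_sum_eq {M : Type*} [AddCommMonoid M]
    [IsRightCancelAdd M] {l₁ l₂ : List M} (hlen : l₁.length = l₂.length)
    (htail : l₁.tail = l₂.tail) (hsum : l₁.sum = l₂.sum) : l₁ = l₂ := by
  match l₁, l₂, hlen with
  | [], [], _ => rfl
  | a :: l, b :: l', _ =>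
    obtain rfl : l = l' := htail
    rw [List.sum_cons, List.sum_cons] at hsum
    rw [add_right_cancel hsum]

namespace GapPartition

def gapLists (d a n : ℕ) : Set (List ℕ) :=
  {L | L.IsChain (fun x y => y + d ≤ x) ∧ (∀ x ∈ L, a ≤ x) ∧ L.sum = n}

lemma pairwise_of_mem_gapLists {d a n : ℕ} {L : List ℕ} (hL : L ∈ gapLists d a n) :
    L.Pairwise (fun x y => y + d ≤ x) :=
  have : Trans (fun x y : ℕ => y + d ≤ x) (fun x y => y + d ≤ x) (fun x y => y + d ≤ x) :=
    ⟨fun h₁ h₂ => by omega⟩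
  List.isChain_iff_pairwise.mp hL.1

def partitionEquivGapLists {d a n : ℕ} (hd : 1 ≤ d) (ha : 1 ≤ a) :
    {p : n.Partition // (∀ i ∈ p.parts, a ≤ i) ∧ (∀ i : ℕ, p.parts.count i ≤ 1) ∧
      (∀ i ∈ p.parts, ∀ j ∈ p.parts, i ≠ j → d ≤ i - j ∨ d ≤ j - i)} ≃ gapLists d a n where
  toFun p := by
    refine ⟨p.1.parts.sort (· ≥ ·), List.Pairwise.isChain ?_, fun x hx => ?_, ?_⟩
    · have hnd : (p.1.parts.sort (· ≥ ·)).Nodup := by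
        rw [← Multiset.coe_nodup, Multiset.sort_eq]
        exact Multiset.nodup_iff_count_le_one.mpr p.2.2.1
      refine ((Multiset.pairwise_sort _ _).and hnd).imp_of_mem fun hx hy hxy => ?_
      have := p.2.2.2 _ ((Multiset.mem_sort _).mp hx) _ ((Multiset.mem_sort _).mp hy) hxy.2
      have := hxy.1
      omega
    · exact p.2.1 x ((Multiset.mem_sort _).mp hx)
    · rw [← Multiset.sum_coe, Multiset.sort_eq, p.1.parts_sum]
  invFun L := by
    have hpw := pairwise_of_mem_gapLists L.2
    refine ⟨⟨L.1, fun {i} hi => ?_, by rw [Multiset.sum_coe, L.2.2.2]⟩, L.2.2.1, fun i => ?_, ?_⟩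
    · have := L.2.2.1 i hi
      omega
    · refine Multiset.nodup_iff_count_le_one.mp (Multiset.coe_nodup.mpr (hpw.imp ?_)) i
      omega
    · have : Std.Symm fun i j : ℕ => d ≤ i - j ∨ d ≤ j - i := ⟨fun _ _ => Or.symm⟩
      exact (hpw.imp fun h => Or.inl (by omega)).forall
  left_inv p := Subtype.ext (Nat.Partition.ext (Multiset.sort_eq _ _))
  right_inv L := Subtype.ext <| by
    refine (Multiset.coe_sort _ _).trans (List.mergeSort_eq_self _ ?_)
    exact (pairwise_of_mem_gapLists L.2).imp fun h => by omega

lemma qpart_eq_ncard_gapLists {d a n : ℕ} (hd : 1 ≤ d) (ha : 1 ≤ a) :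
    qpart d a n = (gapLists d a n).ncard := by
  rw [qpart, Nat.card_congr (partitionEquivGapLists hd ha), Nat.card_coe_set_eq]

lemma finite_gapLists {d a n : ℕ} (hd : 1 ≤ d) (ha : 1 ≤ a) : (gapLists d a n).Finite :=
  Set.finite_coe_iff.mp (Finite.of_equiv _ (partitionEquivGapLists hd ha))

def stair (b c : ℕ) : ℕ → List ℕ
  | 0 => []
  | k + 1 => (b + c * k) :: stair b c k

@[simp] lemma length_stair (b c k : ℕ) : (stair b c k).length = k := by
  induction k <;> simp [stair, *]

lemma sum_stair (b c k : ℕ) : (stair b c k).sum = k * b + c * k.choose 2 := by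
  induction k with
  | zero => simp [stair]
  | succ k ih =>
    rw [stair, List.sum_cons, ih, Nat.choose_succ_succ', Nat.choose_one_right]
    ring

lemma strictMono_sum_stair {b : ℕ} (hb : 0 < b) (c : ℕ) :
    StrictMono fun k => (stair b c k).sum :=
  strictMono_nat_of_lt_succ fun k => by simp only [stair, List.sum_cons]; omega

lemma forall₂_stair_le {b q : ℕ} :
    ∀ {L : List ℕ}, L.IsChain (fun x y => y + q ≤ x) → (∀ x ∈ L, b ≤ x) →
      List.Forall₂ (· ≤ ·) (stair b q L.length) L
  | [], _, _ => .nil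
  | x :: xs, hc, hb => by
    rw [List.isChain_cons] at hc
    have ih := forall₂_stair_le hc.2 fun y hy => hb y (List.mem_cons_of_mem x hy)
    refine .cons ?_ ih
    cases xs with
    | nil => simpa using hb x (by simp)
    | cons y ys =>
      have hy := (List.forall₂_cons.mp ih).1
      have hxy := hc.1 y rfl
      simp only [List.length_cons] at hy ⊢
      linarith

def lift (c e : ℕ) : List ℕ → List ℕ
  | [] => []
  | x :: xs => (x + c + e * xs.length) :: lift c e xs

@[simp] lemma length_lift (c e : ℕ) (L : List ℕ) : (lift c e L).length = L.length := by
  induction L <;> simp [lift, *]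

lemma sum_lift (c e : ℕ) (L : List ℕ) :
    (lift c e L).sum = L.sum + (stair c e L.length).sum := by
  induction L with
  | nil => rfl
  | cons x xs ih => simp only [lift, stair, List.sum_cons, List.length_cons, ih]; ring

lemma isChain_lift {c e q : ℕ} :
    ∀ {L : List ℕ}, L.IsChain (fun x y => y + q ≤ x) →
      (lift c e L).IsChain (fun x y => y + (q + e) ≤ x)
  | [], _ => .nil
  | [_], _ => .singleton _
  | x :: y :: ys, h => by
    rw [List.isChain_cons_cons] at h
    have ih := isChain_lift (c := c) (e := e) h.2
    simp only [lift, List.length_cons] at ih ⊢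
    exact .cons_cons (by linarith [h.1]) ih

lemma lift_mem_gapLists {c e q b m : ℕ} {L : List ℕ} (hL : L ∈ gapLists q b m) :
    lift c e L ∈ gapLists (q + e) (b + c) (m + (stair c e L.length).sum) := by
  obtain ⟨hc, hb, hs⟩ := hL
  refine ⟨isChain_lift hc, ?_, by rw [sum_lift, hs]⟩
  clear hc hs
  induction L with
  | nil => simp [lift]
  | cons x xs ih =>
    simp only [lift, List.mem_cons, forall_eq_or_imp] at hb ⊢
    exact ⟨by omega, ih hb.2⟩

lemma tail_lift (c e : ℕ) (L : List ℕ) : (lift c e L).tail = lift c e L.tail := by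
  cases L <;> rfl

lemma lift_injective (c e : ℕ) : Function.Injective (lift c e)
  | [], [], _ => rfl
  | x :: xs, x' :: xs', h => by
    simp only [lift, List.cons.injEq] at h
    obtain rfl := lift_injective c e h.2
    rw [Nat.add_right_cancel (Nat.add_right_cancel h.1)]
  | [], _ :: _, h | _ :: _, [], h => by simp [lift] at h

def topUp (n : ℕ) : List ℕ → List ℕ
  | [] => []
  | _ :: xs => (n - xs.sum) :: xs

@[simp] lemma length_topUp (n : ℕ) (M : List ℕ) : (topUp n M).length = M.length := by
  cases M <;> rfl

lemma tail_topUp (n : ℕ) (M : List ℕ) : (topUp n M).tail = M.tail := by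
  cases M <;> rfl

lemma topUp_mem_gapLists {d a s n : ℕ} {M : List ℕ} (hM : M ∈ gapLists d a s) (h0 : M ≠ [])
    (hsn : s ≤ n) : topUp n M ∈ gapLists d a n := by
  obtain ⟨x, xs, rfl⟩ := List.exists_cons_of_ne_nil h0
  obtain ⟨hc, hb, hs⟩ := hM
  simp only [List.sum_cons] at hs
  simp only [List.mem_cons, forall_eq_or_imp] at hb
  refine ⟨?_, ?_, ?_⟩
  · rw [topUp, List.isChain_cons] at *
    exact ⟨fun y hy => by have := hc.1 y hy; omega, hc.2⟩
  · simp only [topUp, List.mem_cons, forall_eq_or_imp]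
    exact ⟨by omega, hb.2⟩
  · simp only [topUp, List.sum_cons]; omega

def balancedPair (d n : ℕ) : List ℕ := [n - (n - d) / 2, (n - d) / 2]

lemma balancedPair_mem_gapLists {d a n : ℕ} (h : d + 2 * a ≤ n) :
    balancedPair d n ∈ gapLists d a n := by
  refine ⟨.cons_cons (by omega) (.singleton _), ?_, ?_⟩
  · simp only [balancedPair, List.mem_cons, List.not_mem_nil, or_false, forall_eq_or_imp,
      forall_eq]
    omega
  · simp only [balancedPair, List.sum_cons, List.sum_nil]; omega

lemma two_mul_add_le_of_topUp_lift_eq {c e q m n u v : ℕ} {L : List ℕ}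
    (hL : L ∈ gapLists q 1 m) (h : topUp n (lift c e L) = [u, v]) : 2 * v + q ≤ m + 2 * c := by
  have hlen : L.length = 2 := by simpa using congrArg List.length h
  obtain ⟨x₁, x₂, rfl⟩ := List.length_eq_two.mp hlen
  obtain ⟨hc, -, hs⟩ := hL
  simp only [lift, topUp, List.length_nil, List.sum_cons, List.sum_nil, List.cons.injEq] at h
  simp only [List.isChain_pair, List.sum_cons, List.sum_nil] at hc hs
  omega

lemma overflow_bounds {c d e q m n k : ℕ} (he : q + e = d) (hq : 1 ≤ q)
    (hdq : d ≤ (c + 1) * q) (hm : (c + 1) * m < n + c + 1) (hn : d + 2 * (c + 1) ≤ n)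
    (hmin : k + q * k.choose 2 ≤ m) (hover : n < m + (k * c + e * k.choose 2)) :
    m = k + q * k.choose 2 ∧ m + d + 2 * (c + 1) ≤ n + q := by
  have hec : e ≤ c * q := by nlinarith
  have hmk : m = k + q * k.choose 2 := by
    by_contra hne
    have hlt : k + q * k.choose 2 + 1 ≤ m := by omega
    nlinarith [Nat.mul_le_mul_left c hlt, Nat.mul_le_mul_right (k.choose 2) hec]
  have hk : 3 ≤ k := by
    by_contra hk
    interval_cases k <;>
      simp only [Nat.choose_zero_succ, Nat.choose_succ_self, Nat.choose_self, mul_zero, mul_one,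
        add_zero, zero_mul, one_mul] at hmk hover <;>
      omega
  have hT : 3 ≤ k.choose 2 := Nat.choose_le_choose 2 hk
  have hc : 1 ≤ c := by nlinarith [Nat.mul_le_mul_right (k.choose 2) hec]
  exact ⟨hmk, by nlinarith⟩

def embed (c e d n : ℕ) (L : List ℕ) : List ℕ :=
  if (lift c e L).sum ≤ n then topUp n (lift c e L) else balancedPair d n

variable {c d e q m n : ℕ}

lemma eq_stair_of_lt_sum_lift (he : q + e = d) (hq : 1 ≤ q) (hdq : d ≤ (c + 1) * q)
    (hm : (c + 1) * m < n + c + 1) (hn : d + 2 * (c + 1) ≤ n) {L : List ℕ}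
    (hL : L ∈ gapLists q 1 m) (hover : n < (lift c e L).sum) :
    L = stair 1 q L.length ∧ m + d + 2 * (c + 1) ≤ n + q := by
  have hle := forall₂_stair_le hL.1 hL.2.1
  have hmin := hle.sum_le_sum
  rw [hL.2.2, sum_stair, mul_one] at hmin
  rw [sum_lift, hL.2.2, sum_stair] at hover
  obtain ⟨hmk, hbound⟩ := overflow_bounds he hq hdq hm hn hmin hover
  refine ⟨(List.eq_of_forall₂_le_of_sum_le hle ?_).symm, hbound⟩
  rw [hL.2.2, sum_stair, mul_one, hmk]

lemma embed_mem_gapLists (he : q + e = d) (hn : d + 2 * (c + 1) ≤ n) (hm0 : 0 < m)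
    {L : List ℕ} (hL : L ∈ gapLists q 1 m) : embed c e d n L ∈ gapLists d (c + 1) n := by
  unfold embed
  split_ifs with hfit
  · have hlift := lift_mem_gapLists (c := c) (e := e) hL
    rw [he, add_comm 1 c] at hlift
    have hL0 : L ≠ [] := by rintro rfl; exact hm0.ne hL.2.2
    refine topUp_mem_gapLists hlift ?_ (by rwa [← hlift.2.2])
    rwa [← List.length_pos_iff, length_lift, List.length_pos_iff]
  · exact balancedPair_mem_gapLists hn

lemma embed_injOn (he : q + e = d) (hq : 1 ≤ q) (hdq : d ≤ (c + 1) * q)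
    (hm : (c + 1) * m < n + c + 1) (hn : d + 2 * (c + 1) ≤ n) :
    Set.InjOn (embed c e d n) (gapLists q 1 m) := by
  intro L hL L' hL' h
  unfold embed at h
  split_ifs at h with hfit hfit' hfit'
  · have hlen : L.length = L'.length := by simpa using congrArg List.length h
    have htail := congrArg List.tail h
    rw [tail_topUp, tail_topUp, tail_lift, tail_lift] at htail
    exact List.eq_of_length_eq_of_tail_eq_of_sum_eq hlen (lift_injective c e htail)
      (hL.2.2.trans hL'.2.2.symm)
  · have := two_mul_add_le_of_topUp_lift_eq hL h
    have := (eq_stair_of_lt_sum_lift he hq hdq hm hn hL' (not_le.mp hfit')).2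
    omega
  · have := two_mul_add_le_of_topUp_lift_eq hL' h.symm
    have := (eq_stair_of_lt_sum_lift he hq hdq hm hn hL (not_le.mp hfit)).2
    omega
  · have hst := (eq_stair_of_lt_sum_lift he hq hdq hm hn hL (not_le.mp hfit)).1
    have hst' := (eq_stair_of_lt_sum_lift he hq hdq hm hn hL' (not_le.mp hfit')).1
    have hsum : (stair 1 q L.length).sum = (stair 1 q L'.length).sum := by
      rw [← hst, ← hst', hL.2.2, hL'.2.2]
    rw [hst, hst', (strictMono_sum_stair one_pos q).injective hsum]

end GapPartition

open GapPartition in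
theorem stmt2 (a d n : ℕ) (ha : 1 ≤ a) (hd : 1 ≤ d) (hn : d + 2 * a ≤ n) :
    qpart ((d + a - 1) / a) 1 ((n + a - 1) / a) ≤ qpart d a n := by
  obtain ⟨c, rfl⟩ : ∃ c, a = c + 1 := ⟨a - 1, by omega⟩
  rw [Nat.add_succ_sub_one, Nat.add_succ_sub_one]
  have hdq : d ≤ (c + 1) * ((d + c) / (c + 1)) := by
    have := Nat.lt_div_mul_add (a := d + c) (b := c + 1) (by omega)
    rw [mul_comm]; omega
  have hqd : (d + c) / (c + 1) ≤ d := Nat.div_le_of_le_mul (by nlinarith)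
  have hm : (c + 1) * ((n + c) / (c + 1)) < n + c + 1 := by
    have := Nat.div_mul_le_self (n + c) (c + 1)
    rw [mul_comm]; omega
  have hm0 : 0 < (n + c) / (c + 1) := Nat.div_pos (by omega) c.succ_pos
  generalize (d + c) / (c + 1) = q at *
  generalize (n + c) / (c + 1) = m at *
  have hq : 1 ≤ q := Nat.one_le_iff_ne_zero.mpr fun h => by rw [h, mul_zero] at hdq; omega
  have he : q + (d - q) = d := by omega
  rw [qpart_eq_ncard_gapLists hq le_rfl, qpart_eq_ncard_gapLists hd ha]
  exact Set.ncard_le_ncard_of_injOn (embed c (d - q) d n)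
    (fun L hL => embed_mem_gapLists he hn hm0 hL)
    (embed_injOn he hq hdq hm hn) (finite_gapLists hd ha)
end

section
/- For all d ≥ 1, a ≥ 1, and n ≥ 1, the generating function identity holds: ∑_{n≥0} q_d^{(a)}(n) q^n = ∑_{k≥0} q^{d·C(k,2) + ka} / ((q;q)_k), where C(k,2) = k(k−1)/2 and (q;q)_k = ∏_{j=1}^{k}(1−q^j). -/
/-- $(q;q)_k = \prod_{j=1}^k (1 - q^j)$ as a formal power series over ℚ. -/
noncomputable def qPoch (k : ℕ) : PowerSeries ℚ :=
  ∏ j ∈ Finset.range k, (1 - (PowerSeries.X : PowerSeries ℚ) ^ (j + 1))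

/-! Write the `k` parts of a partition counted by `qpart d a n` in increasing order as
`x i = a + d * i + (g 0 + ⋯ + g i)` with arbitrary gaps `g i ≥ 0`. The gap `g i` enters the
`k - i` largest parts, so `n = d * C(k, 2) + k * a + ∑ i < k, (k - i) * g i`: these partitions
correspond to tuples `(l i)_{i < k}` with `(k - i) ∣ l i` summing to `n - d * C(k, 2) - k * a`,
which is what the coefficient of `q ^ n` in `q ^ (d * C(k, 2) + k * a) / (q;q)_k` counts. -/

open Finset PowerSeries

namespace SeparatedPartition

variable {d a k : ℕ}

def ofGaps (d a : ℕ) (g : ℕ → ℕ) (i : ℕ) : ℕ := a + d * i + ∑ j ∈ range (i + 1), g j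

def toGaps (d a : ℕ) (f : ℕ → ℕ) (i : ℕ) : ℕ := if i = 0 then f 0 - a else f i - f (i - 1) - d

theorem ofGaps_zero (g : ℕ → ℕ) : ofGaps d a g 0 = a + g 0 := by
  simp [ofGaps]

theorem ofGaps_succ (g : ℕ → ℕ) (i : ℕ) :
    ofGaps d a g (i + 1) = ofGaps d a g i + d + g (i + 1) := by
  rw [ofGaps, ofGaps, sum_range_succ _ (i + 1)]
  ring

theorem ofGaps_congr {g g' : ℕ → ℕ} {i : ℕ} (h : ∀ j ≤ i, g j = g' j) :
    ofGaps d a g i = ofGaps d a g' i := by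
  unfold ofGaps
  rw [sum_congr rfl fun j hj => h j (Nat.lt_succ_iff.1 (mem_range.1 hj))]

theorem le_ofGaps (g : ℕ → ℕ) (i : ℕ) : a ≤ ofGaps d a g i := by
  unfold ofGaps
  omega

theorem ofGaps_add_le_of_lt (g : ℕ → ℕ) {i j : ℕ} (hij : i < j) :
    ofGaps d a g i + d ≤ ofGaps d a g j := by
  have hmono : Monotone (ofGaps d a g) :=
    monotone_nat_of_le_succ fun i => by rw [ofGaps_succ]; omega
  calc ofGaps d a g i + d ≤ ofGaps d a g (i + 1) := by rw [ofGaps_succ]; omega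
    _ ≤ ofGaps d a g j := hmono hij

theorem strictMono_ofGaps (hd : 1 ≤ d) (g : ℕ → ℕ) : StrictMono (ofGaps d a g) :=
  fun _ _ hij => by have := ofGaps_add_le_of_lt (d := d) (a := a) g hij; omega

theorem toGaps_ofGaps (g : ℕ → ℕ) : toGaps d a (ofGaps d a g) = g := by
  funext i
  cases i with
  | zero => simp [toGaps, ofGaps_zero]
  | succ i =>
    simp only [toGaps, ofGaps_succ, Nat.add_one_ne_zero, if_false, Nat.add_sub_cancel]
    omega

theorem ofGaps_toGaps {f : ℕ → ℕ} (h0 : a ≤ f 0) (hsucc : ∀ i, i + 1 < k → f i + d ≤ f (i + 1)) :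
    ∀ i < k, ofGaps d a (toGaps d a f) i = f i := by
  intro i hi
  induction i with
  | zero => rw [ofGaps_zero, toGaps, if_pos rfl]; omega
  | succ i ih =>
    have := hsucc i hi
    rw [ofGaps_succ, ih (by omega), toGaps, if_neg i.succ_ne_zero, Nat.add_sub_cancel]
    omega

theorem sum_ofGaps (g : ℕ → ℕ) (k : ℕ) :
    ∑ i ∈ range k, ofGaps d a g i = d * k.choose 2 + k * a + ∑ i ∈ range k, (k - i) * g i := by
  induction k with
  | zero => simp
  | succ k ih =>
    have hweights : ∑ i ∈ range (k + 1), (k + 1 - i) * g i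
        = ∑ i ∈ range k, (k - i) * g i + ∑ i ∈ range (k + 1), g i := by
      rw [sum_range_succ, sum_range_succ (fun i => g i), Nat.add_sub_cancel_left, one_mul,
        ← add_assoc, ← sum_add_distrib]
      congr 1
      exact sum_congr rfl fun i hi => by
        rw [mem_range] at hi
        rw [show k + 1 - i = k - i + 1 by omega]
        ring
    rw [sum_range_succ, ih, hweights, ofGaps, Nat.choose_succ_succ', Nat.choose_one_right]
    ring

def nthSmallest (P : Multiset ℕ) (i : ℕ) : ℕ := (P.sort).getD i 0

theorem nthSmallest_mem {P : Multiset ℕ} {i : ℕ} (hi : i < P.card) : nthSmallest P i ∈ P := by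
  rw [nthSmallest, List.getD_eq_getElem _ _ (by simpa using hi), ← Multiset.mem_sort (· ≤ ·)]
  exact List.getElem_mem _

theorem map_nthSmallest_range (P : Multiset ℕ) :
    (Multiset.range P.card).map (nthSmallest P) = P := by
  conv_rhs => rw [← P.sort_eq (· ≤ ·)]
  rw [Multiset.range, Multiset.map_coe, Multiset.coe_eq_coe]
  refine List.Perm.of_eq (List.ext_getElem (by simp) fun i h₁ h₂ => ?_)
  simp [nthSmallest, List.getElem?_eq_getElem h₂]

theorem nthSmallest_map_range {f : ℕ → ℕ} (hf : StrictMono f) {k i : ℕ} (hi : i < k) :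
    nthSmallest ((Multiset.range k).map f) i = f i := by
  rw [nthSmallest, ← Multiset.map_sort f _ (· ≤ ·) (· ≤ ·) (fun _ _ _ _ => hf.le_iff_le.symm),
    Multiset.sort_range]
  simp [hi]

theorem nthSmallest_add_le_succ {P : Multiset ℕ} (hnd : P.Nodup)
    (hgap : ∀ x ∈ P, ∀ y ∈ P, x ≠ y → d ≤ x - y ∨ d ≤ y - x) {i : ℕ} (hi : i + 1 < P.card) :
    nthSmallest P i + d ≤ nthSmallest P (i + 1) := by
  have hlen : P.sort.length = P.card := Multiset.length_sort _
  have hsep : P.sort.Pairwise (fun x y => x + d ≤ y) := by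
    have hsort_nodup : P.sort.Nodup := Multiset.coe_nodup.1 ((P.sort_eq (· ≤ ·)).symm ▸ hnd)
    have hlt : P.sort.Pairwise (· < ·) :=
      (Multiset.pairwise_sort P (· ≤ ·)).and hsort_nodup |>.imp fun h => lt_of_le_of_ne h.1 h.2
    refine hlt.imp_of_mem fun hx hy hxy => ?_
    rw [Multiset.mem_sort (· ≤ ·)] at hx hy
    rcases hgap _ hx _ hy hxy.ne with h | h <;> omega
  rw [List.pairwise_iff_getElem] at hsep
  simpa [nthSmallest, List.getD_eq_getElem, hlen, hi, (by omega : i < P.card)] using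
    hsep i (i + 1) (by omega) (by omega) (by omega)

structure IsSeparated (d a : ℕ) (P : Multiset ℕ) : Prop where
  le_of_mem : ∀ x ∈ P, a ≤ x
  nodup : P.Nodup
  gap : ∀ x ∈ P, ∀ y ∈ P, x ≠ y → d ≤ x - y ∨ d ≤ y - x

theorem isSeparated_iff {P : Multiset ℕ} :
    IsSeparated d a P ↔ (∀ x ∈ P, a ≤ x) ∧ P.Nodup ∧
      ∀ x ∈ P, ∀ y ∈ P, x ≠ y → d ≤ x - y ∨ d ≤ y - x :=
  ⟨fun h => ⟨h.le_of_mem, h.nodup, h.gap⟩, fun ⟨h₁, h₂, h₃⟩ => ⟨h₁, h₂, h₃⟩⟩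

instance (d a : ℕ) : DecidablePred (IsSeparated d a) :=
  fun _ => decidable_of_iff _ isSeparated_iff.symm

namespace IsSeparated

variable {P : Multiset ℕ} (hP : IsSeparated d a P)
include hP

theorem ofGaps_toGaps_nthSmallest :
    ∀ i < P.card, ofGaps d a (toGaps d a (nthSmallest P)) i = nthSmallest P i := fun i hi =>
  ofGaps_toGaps (hP.le_of_mem _ (nthSmallest_mem (by omega)))
    (fun _ h => nthSmallest_add_le_succ hP.nodup hP.gap h) i hi

theorem map_range_ofGaps :
    (Multiset.range P.card).map (ofGaps d a (toGaps d a (nthSmallest P))) = P := by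
  conv_rhs => rw [← map_nthSmallest_range P]
  exact Multiset.map_congr rfl fun i hi =>
    hP.ofGaps_toGaps_nthSmallest i (Multiset.mem_range.1 hi)

theorem sum_eq : P.sum = d * P.card.choose 2 + P.card * a
    + ∑ i ∈ range P.card, (P.card - i) * toGaps d a (nthSmallest P) i := by
  conv_lhs => rw [← hP.map_range_ofGaps]
  exact sum_ofGaps _ _

end IsSeparated

theorem isSeparated_map_range_ofGaps (hd : 1 ≤ d) (g : ℕ → ℕ) (k : ℕ) :
    IsSeparated d a ((Multiset.range k).map (ofGaps d a g)) where
  le_of_mem := by simp [le_ofGaps]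
  nodup := (Multiset.nodup_range k).map (strictMono_ofGaps hd g).injective
  gap := by
    simp only [Multiset.mem_map, Multiset.mem_range]
    rintro _ ⟨i, -, rfl⟩ _ ⟨j, -, rfl⟩ hne
    rcases lt_trichotomy i j with h | rfl | h
    · have := ofGaps_add_le_of_lt (d := d) (a := a) g h; omega
    · exact absurd rfl hne
    · have := ofGaps_add_le_of_lt (d := d) (a := a) g h; omega

theorem toGaps_nthSmallest_map_range_ofGaps (hd : 1 ≤ d) (g : ℕ → ℕ) {k i : ℕ} (hi : i < k) :
    toGaps d a (nthSmallest ((Multiset.range k).map (ofGaps d a g))) i = g i := by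
  have hnth := fun j (hj : j < k) => nthSmallest_map_range (strictMono_ofGaps (a := a) hd g) hj
  rw [← congrFun (toGaps_ofGaps (d := d) (a := a) g) i]
  unfold toGaps
  split_ifs
  · rw [hnth 0 (by omega)]
  · rw [hnth i hi, hnth (i - 1) (by omega)]

noncomputable def weightedGaps (d a : ℕ) (P : Multiset ℕ) : ℕ →₀ ℕ :=
  Finsupp.indicator (range P.card) fun i _ => (P.card - i) * toGaps d a (nthSmallest P) i

theorem weightedGaps_apply {P : Multiset ℕ} {i : ℕ} (hi : i < P.card) :
    weightedGaps d a P i = (P.card - i) * toGaps d a (nthSmallest P) i :=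
  Finsupp.indicator_of_mem (mem_range.2 hi) _

theorem card_isSeparated_eq (hd : 1 ≤ d) (ha : 1 ≤ a) {n k m : ℕ}
    (hm : d * k.choose 2 + k * a + m = n) :
    #{p : n.Partition | IsSeparated d a p.parts ∧ p.parts.card = k}
      = #{l ∈ (range k).finsuppAntidiag m | ∀ i ∈ range k, (k - i) ∣ l i} := by
  have sum_ofGaps_div {l : ℕ →₀ ℕ} (hl : ∀ i ∈ range k, (k - i) ∣ l i) :
      ∑ i ∈ range k, ofGaps d a (fun i => l i / (k - i)) i
        = d * k.choose 2 + k * a + ∑ i ∈ range k, l i := by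
    rw [sum_ofGaps]
    exact congrArg _ (sum_congr rfl fun i hi => Nat.mul_div_cancel' (hl i hi))
  refine card_bij' (fun p _ => weightedGaps d a p.parts)
    (fun l hl => ⟨(Multiset.range k).map (ofGaps d a fun i => l i / (k - i)), ?_, ?_⟩)
    ?_ ?_ ?_ ?_
  · simp only [Multiset.mem_map]
    rintro _ ⟨i, -, rfl⟩
    exact ha.trans (le_ofGaps _ i)
  · simp only [mem_filter, mem_finsuppAntidiag] at hl
    change ∑ i ∈ range k, _ = n
    rw [sum_ofGaps_div hl.2, hl.1.1, hm]
  · rintro p hp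
    simp only [mem_filter, mem_univ, true_and] at hp
    obtain ⟨hP, rfl⟩ := hp
    simp only [mem_filter, mem_finsuppAntidiag]
    refine ⟨⟨?_, Finsupp.support_indicator_subset _ _⟩, fun i hi => ?_⟩
    · have := hP.sum_eq
      rw [p.parts_sum] at this
      rw [sum_congr rfl fun i hi => weightedGaps_apply (mem_range.1 hi)]
      omega
    · rw [weightedGaps_apply (mem_range.1 hi)]
      exact dvd_mul_right _ _
  · intro l _
    simp only [mem_filter, mem_univ, true_and, Multiset.card_map, Multiset.card_range, and_true]
    exact isSeparated_map_range_ofGaps hd _ k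
  · rintro p hp
    simp only [mem_filter, mem_univ, true_and] at hp
    obtain ⟨hP, rfl⟩ := hp
    ext1
    dsimp only
    conv_rhs => rw [← hP.map_range_ofGaps]
    refine Multiset.map_congr rfl fun i hi => ?_
    refine ofGaps_congr fun j hj => ?_
    rw [Multiset.mem_range] at hi
    rw [weightedGaps_apply (by omega), Nat.mul_div_cancel_left _ (by omega)]
  · intro l hl
    simp only [mem_filter, mem_finsuppAntidiag] at hl
    ext i
    by_cases hi : i < k
    · rw [weightedGaps_apply (by simpa using hi), Multiset.card_map, Multiset.card_range,
        toGaps_nthSmallest_map_range_ofGaps hd _ hi, Nat.mul_div_cancel' (hl.2 i (mem_range.2 hi))]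
    · rw [weightedGaps, Finsupp.indicator_of_notMem (by simpa using hi),
        Finsupp.notMem_support_iff.1 fun h => hi (mem_range.1 (hl.1.2 h))]

theorem mk_ite_dvd_mul_one_sub_X_pow {R : Type*} [Ring R] {w : ℕ} (hw : 0 < w) :
    PowerSeries.mk (fun n => if w ∣ n then (1 : R) else 0) * (1 - X ^ w) = 1 := by
  ext n
  rw [mul_sub, mul_one, map_sub, coeff_mul_X_pow', coeff_mk, coeff_one]
  rcases Nat.lt_or_ge n w with hn | hn
  · rcases Nat.eq_zero_or_pos n with rfl | hn₀
    · simp [hw.ne']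
    · simp [Nat.not_le.2 hn, hn₀.ne', Nat.not_dvd_of_pos_of_lt hn₀ hn]
  · obtain ⟨m, rfl⟩ := Nat.exists_eq_add_of_le' hn
    simp [Nat.dvd_add_self_right, hw.ne']

theorem coeff_prod_mk_ite_dvd {R : Type*} [CommSemiring R] {ι : Type*} [DecidableEq ι]
    (s : Finset ι) (w : ι → ℕ) (m : ℕ) :
    coeff m (∏ i ∈ s, PowerSeries.mk fun n => if w i ∣ n then (1 : R) else 0)
      = #{l ∈ s.finsuppAntidiag m | ∀ i ∈ s, w i ∣ l i} := by
  classical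
  simp only [coeff_prod, coeff_mk, prod_boole, sum_boole]

theorem qPoch_inv (k : ℕ) :
    (qPoch k)⁻¹ = ∏ i ∈ range k, PowerSeries.mk fun n => if (k - i) ∣ n then (1 : ℚ) else 0 := by
  rw [PowerSeries.inv_eq_iff_mul_eq_one, qPoch, ← prod_range_reflect, ← prod_mul_distrib]
  · refine prod_eq_one fun i hi => ?_
    rw [mem_range] at hi
    rw [show k - (k - 1 - i) = i + 1 by omega]
    exact mk_ite_dvd_mul_one_sub_X_pow i.succ_pos
  · simp [qPoch, map_prod]

theorem card_parts_le {n : ℕ} (p : n.Partition) : p.parts.card ≤ n := by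
  simpa [p.parts_sum] using Multiset.card_nsmul_le_sum (a := 1) fun _ hx => p.parts_pos hx

theorem qpart_eq_card (d a n : ℕ) : qpart d a n = #{p : n.Partition | IsSeparated d a p.parts} := by
  classical
  rw [qpart, Nat.card_eq_fintype_card, Fintype.card_subtype]
  congr 1
  ext p
  simp only [mem_filter, mem_univ, true_and, isSeparated_iff, Multiset.nodup_iff_count_le_one]

theorem card_isSeparated_eq_coeff (hd : 1 ≤ d) (ha : 1 ≤ a) (n k : ℕ) :
    (#{p : n.Partition | IsSeparated d a p.parts ∧ p.parts.card = k} : ℚ)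
      = coeff n (X ^ (d * k.choose 2 + k * a) * (qPoch k)⁻¹) := by
  rw [coeff_X_pow_mul', qPoch_inv]
  split_ifs with h
  · rw [coeff_prod_mk_ite_dvd, card_isSeparated_eq hd ha (Nat.add_sub_cancel' h)]
  · rw [Nat.cast_eq_zero, card_eq_zero, filter_eq_empty_iff]
    rintro p - ⟨hP, rfl⟩
    have := hP.sum_eq
    rw [p.parts_sum] at this
    omega

end SeparatedPartition

theorem stmt5_general (d a : ℕ) (hd : 1 ≤ d) (ha : 1 ≤ a) (n : ℕ) :
    (qpart d a n : ℚ) =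
      ∑ k ∈ Finset.range (n + 1),
        PowerSeries.coeff n
          ((PowerSeries.X : PowerSeries ℚ) ^ (d * k.choose 2 + k * a) * (qPoch k)⁻¹) := by
  rw [SeparatedPartition.qpart_eq_card, Finset.card_eq_sum_card_fiberwise fun p _ =>
    Finset.mem_range.2 (Nat.lt_succ_of_le (SeparatedPartition.card_parts_le p)), Nat.cast_sum]
  refine Finset.sum_congr rfl fun k _ => ?_
  rw [Finset.filter_filter, SeparatedPartition.card_isSeparated_eq_coeff hd ha]

theorem stmt5 (d a : ℕ) (hd : 1 ≤ d) (ha : 1 ≤ a) (n : ℕ) (hn : 1 ≤ n) :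
    (qpart d a n : ℚ) =
      ∑ k ∈ Finset.range (n + 1),
        PowerSeries.coeff n
          ((PowerSeries.X : PowerSeries ℚ) ^ (d * k.choose 2 + k * a) * (qPoch k)⁻¹) :=
  stmt5_general d a hd ha n
end

section
/- Let a, t, s, d be integers with a ≥ 1, t ≥ log₂(a), s ≥ t+4, d ≥ 2^s − 2^t, 2^t dividing d, and d−3 ≤ b ≤ d. Let T = {y ∈ ℕ : y ≡ 2^t, d+2^{t+1}, …, d+2^{s−1} (mod 2d)} and S = {x ∈ ℕ : x ≡ ±a (mod b+3)} \ {a, b+3−a}. Then for all n ≥ 1, the number of partitions of 2^t n into parts from T is at least the number of partitions of 2^t n into parts from S. -/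
/-! ### Auxiliary machinery for `stmt12` -/

/-- The map on individual parts. -/
def stmt12F (a d m u x : ℕ) : ℕ :=
  if x % m = a then
    if (x / m) % 2 = 0 then (x / m - 1) * d + 8 * u else u + (x / m - 1) * d
  else
    if ((x + a) / m) % 2 = 0 then ((x + a) / m - 1) * d + 2 * u
    else ((x + a) / m - 2) * d + 4 * u

/-- The inverse map on individual parts. -/
def stmt12G (a d m u y : ℕ) : ℕ :=
  if y % (2 * d) = u then (2 * (y / (2 * d)) + 1) * m + a
  else if y % (2 * d) = d + 2 * u then ((y - 2 * u) / d + 1) * m - a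
  else if y % (2 * d) = d + 4 * u then ((y - 4 * u) / d + 2) * m - a
  else ((y - 8 * u) / d + 1) * m + a

lemma stmt12_sum_map_le (f : ℕ → ℕ) (s : Multiset ℕ) :
    (∀ x ∈ s, f x ≤ x) → (s.map f).sum ≤ s.sum :=
  Multiset.induction_on s (by simp) (fun a s ih h => by
    simp only [Multiset.map_cons, Multiset.sum_cons]
    have h1 := ih (fun x hx => h x (Multiset.mem_cons_of_mem hx))
    have h2 := h a (Multiset.mem_cons_self a s)
    omega)

lemma stmt12_sum_filter_le (p : ℕ → Prop) [DecidablePred p] (s : Multiset ℕ) :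
    (s.filter p).sum ≤ s.sum := by
  conv_rhs => rw [← Multiset.filter_add_not p s]
  rw [Multiset.sum_add]
  exact Nat.le_add_right _ _

lemma stmt12_split (v : ℕ) (s : Multiset ℕ) :
    s.filter (· ≠ v) + Multiset.replicate (s.count v) v = s := by
  have h1 := Multiset.filter_add_not (fun x => x ≠ v) s
  have h2 : Multiset.filter (fun x => ¬x ≠ v) s = Multiset.filter (· = v) s :=
    Multiset.filter_congr (fun x _ => by simp)
  rwa [h2, Multiset.filter_eq'] at h1

/-- The key pointwise properties of `stmt12F`. -/
lemma stmt12key (a t s d m : ℕ) (ha : 1 ≤ a) (hta : a ≤ 2 ^ t) (hs : t + 4 ≤ s)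
    (h15 : 15 * 2 ^ t ≤ d) (hdm : d ≤ m) (hud : 2 ^ t ∣ d) (x : ℕ)
    (hxS : x % m = a % m ∨ (x + a) % m = 0) (hxa : x ≠ a) (hxma : x ≠ m - a)
    (hxm1 : x ≠ m + a) :
    stmt12F a d m (2 ^ t) x ≤ x ∧ 2 ^ t ∣ stmt12F a d m (2 ^ t) x ∧
      0 < stmt12F a d m (2 ^ t) x ∧ stmt12F a d m (2 ^ t) x ≠ 2 ^ t ∧
      stmt12G a d m (2 ^ t) (stmt12F a d m (2 ^ t) x) = x ∧
      (stmt12F a d m (2 ^ t) x % (2 * d) = 2 ^ t % (2 * d) ∨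
        ∃ i, t + 1 ≤ i ∧ i ≤ s - 1 ∧
          stmt12F a d m (2 ^ t) x % (2 * d) = (d + 2 ^ i) % (2 * d)) := by
  have hu : 1 ≤ 2 ^ t := Nat.one_le_two_pow
  have hd0 : 0 < d := by omega
  have ham : a % m = a := Nat.mod_eq_of_lt (by omega)
  have hp1 : (2 : ℕ) ^ (t + 1) = 2 * 2 ^ t := by rw [pow_succ]; ring
  have hp2 : (2 : ℕ) ^ (t + 2) = 4 * 2 ^ t := by rw [pow_succ, pow_succ]; ring
  have hp3 : (2 : ℕ) ^ (t + 3) = 8 * 2 ^ t := by rw [pow_succ, pow_succ, pow_succ]; ring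
  by_cases hc : x % m = a
  · -- plus parts : x = m * k + a
    obtain ⟨k, hk⟩ : ∃ k, x / m = k := ⟨_, rfl⟩
    have hx' := Nat.div_add_mod x m
    rw [hk, hc] at hx'
    have hk2 : 2 ≤ k := by
      obtain rfl | rfl | h : k = 0 ∨ k = 1 ∨ 2 ≤ k := by omega
      · simp at hx'; omega
      · simp at hx'; omega
      · exact h
    have e4 : m * k = k * m := Nat.mul_comm m k
    rcases Nat.mod_two_eq_zero_or_one k with hke | hko
    · -- k even, k = 2j+2 ; F x = (k-1)d + 8u
      obtain ⟨j, hj⟩ : ∃ j, k = 2 * j + 2 := ⟨(k - 2) / 2, by omega⟩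
      have hFv : stmt12F a d m (2 ^ t) x = (k - 1) * d + 8 * 2 ^ t := by
        unfold stmt12F
        rw [hc, if_pos rfl, hk, if_pos hke]
      have hFv2 : stmt12F a d m (2 ^ t) x = d + 8 * 2 ^ t + j * (2 * d) := by
        rw [hFv, hj, show 2 * j + 2 - 1 = 2 * j + 1 by omega]; ring
      have hmod : stmt12F a d m (2 ^ t) x % (2 * d) = d + 8 * 2 ^ t := by
        rw [hFv2, Nat.add_mul_mod_self_right, Nat.mod_eq_of_lt (by omega)]
      have hdiv : (k - 1) * d / d = k - 1 := Nat.mul_div_cancel (k - 1) hd0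
      have f1 : (2 * j + 2) * d ≤ (2 * j + 2) * m := Nat.mul_le_mul_left _ hdm
      have f2 : m * k = (2 * j + 2) * m := by rw [hj, Nat.mul_comm]
      have f3 : (2 * j + 2) * d = j * (2 * d) + 2 * d := by ring
      refine ⟨by omega, ?_, by omega, by omega, ?_, ?_⟩
      · rw [hFv]; exact dvd_add (hud.mul_left (k - 1)) (dvd_mul_left _ 8)
      · unfold stmt12G
        rw [hmod, if_neg (by omega), if_neg (by omega), if_neg (by omega), hFv,
          show (k - 1) * d + 8 * 2 ^ t - 8 * 2 ^ t = (k - 1) * d by omega, hdiv,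
          show k - 1 + 1 = k by omega]
        omega
      · refine Or.inr ⟨t + 3, by omega, by omega, ?_⟩
        rw [hmod, hp3, Nat.mod_eq_of_lt (by omega)]
    · -- k odd, k = 2j+3 ; F x = u + (k-1)d
      obtain ⟨j, hj⟩ : ∃ j, k = 2 * j + 3 := ⟨(k - 3) / 2, by omega⟩
      have hFv : stmt12F a d m (2 ^ t) x = 2 ^ t + (k - 1) * d := by
        unfold stmt12F
        rw [hc, if_pos rfl, hk, if_neg (by omega)]
      have hFv2 : stmt12F a d m (2 ^ t) x = 2 ^ t + (j + 1) * (2 * d) := by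
        rw [hFv, hj, show 2 * j + 3 - 1 = 2 * j + 2 by omega]; ring
      have hmod : stmt12F a d m (2 ^ t) x % (2 * d) = 2 ^ t := by
        rw [hFv2, Nat.add_mul_mod_self_right, Nat.mod_eq_of_lt (by omega)]
      have hdiv : stmt12F a d m (2 ^ t) x / (2 * d) = j + 1 := by
        rw [hFv2, Nat.add_mul_div_right _ _ (by omega : 0 < 2 * d),
          Nat.div_eq_of_lt (by omega), Nat.zero_add]
      have f1 : (2 * j + 3) * d ≤ (2 * j + 3) * m := Nat.mul_le_mul_left _ hdm
      have f2 : m * k = (2 * j + 3) * m := by rw [hj, Nat.mul_comm]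
      have f3 : (2 * j + 3) * d = (j + 1) * (2 * d) + d := by ring
      have f4 : 1 * (2 * d) ≤ (j + 1) * (2 * d) := Nat.mul_le_mul_right _ (by omega)
      refine ⟨by omega, ?_, by omega, by omega, ?_, ?_⟩
      · rw [hFv]; exact dvd_add dvd_rfl (hud.mul_left (k - 1))
      · unfold stmt12G
        rw [hmod, if_pos rfl, hdiv, show 2 * (j + 1) + 1 = k by omega]
        omega
      · exact Or.inl (by rw [hmod, Nat.mod_eq_of_lt (by omega)])
  · -- minus parts : x = m * k - a
    have hc2 : (x + a) % m = 0 := by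
      rcases hxS with h | h
      · rw [ham] at h; exact absurd h hc
      · exact h
    obtain ⟨k, hk⟩ := Nat.dvd_of_mod_eq_zero hc2
    have hdivk : (x + a) / m = k := by
      rw [hk]; exact Nat.mul_div_cancel_left k (by omega)
    have hk2 : 2 ≤ k := by
      obtain rfl | rfl | h : k = 0 ∨ k = 1 ∨ 2 ≤ k := by omega
      · simp at hk; omega
      · simp at hk; omega
      · exact h
    have e4 : m * k = k * m := Nat.mul_comm m k
    rcases Nat.mod_two_eq_zero_or_one k with hke | hko
    · -- k even ; F x = (k-1)d + 2u
      obtain ⟨j, hj⟩ : ∃ j, k = 2 * j + 2 := ⟨(k - 2) / 2, by omega⟩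
      have hFv : stmt12F a d m (2 ^ t) x = (k - 1) * d + 2 * 2 ^ t := by
        unfold stmt12F
        rw [if_neg hc, hdivk, if_pos hke]
      have hFv2 : stmt12F a d m (2 ^ t) x = d + 2 * 2 ^ t + j * (2 * d) := by
        rw [hFv, hj, show 2 * j + 2 - 1 = 2 * j + 1 by omega]; ring
      have hmod : stmt12F a d m (2 ^ t) x % (2 * d) = d + 2 * 2 ^ t := by
        rw [hFv2, Nat.add_mul_mod_self_right, Nat.mod_eq_of_lt (by omega)]
      have hdiv : (k - 1) * d / d = k - 1 := Nat.mul_div_cancel (k - 1) hd0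
      have f1 : (2 * j + 2) * d ≤ (2 * j + 2) * m := Nat.mul_le_mul_left _ hdm
      have f2 : m * k = (2 * j + 2) * m := by rw [hj, Nat.mul_comm]
      have f3 : (2 * j + 2) * d = j * (2 * d) + 2 * d := by ring
      refine ⟨by omega, ?_, by omega, by omega, ?_, ?_⟩
      · rw [hFv]; exact dvd_add (hud.mul_left (k - 1)) (dvd_mul_left _ 2)
      · unfold stmt12G
        rw [hmod, if_neg (by omega), if_pos rfl, hFv,
          show (k - 1) * d + 2 * 2 ^ t - 2 * 2 ^ t = (k - 1) * d by omega, hdiv,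
          show k - 1 + 1 = k by omega]
        omega
      · refine Or.inr ⟨t + 1, by omega, by omega, ?_⟩
        rw [hmod, hp1, Nat.mod_eq_of_lt (by omega)]
    · -- k odd, k = 2j+3 ; F x = (k-2)d + 4u
      obtain ⟨j, hj⟩ : ∃ j, k = 2 * j + 3 := ⟨(k - 3) / 2, by omega⟩
      have hFv : stmt12F a d m (2 ^ t) x = (k - 2) * d + 4 * 2 ^ t := by
        unfold stmt12F
        rw [if_neg hc, hdivk, if_neg (by omega)]
      have hFv2 : stmt12F a d m (2 ^ t) x = d + 4 * 2 ^ t + j * (2 * d) := by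
        rw [hFv, hj, show 2 * j + 3 - 2 = 2 * j + 1 by omega]; ring
      have hmod : stmt12F a d m (2 ^ t) x % (2 * d) = d + 4 * 2 ^ t := by
        rw [hFv2, Nat.add_mul_mod_self_right, Nat.mod_eq_of_lt (by omega)]
      have hdiv : (k - 2) * d / d = k - 2 := Nat.mul_div_cancel (k - 2) hd0
      have f1 : (2 * j + 3) * d ≤ (2 * j + 3) * m := Nat.mul_le_mul_left _ hdm
      have f2 : m * k = (2 * j + 3) * m := by rw [hj, Nat.mul_comm]
      have f3 : (2 * j + 3) * d = j * (2 * d) + 3 * d := by ring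
      refine ⟨by omega, ?_, by omega, by omega, ?_, ?_⟩
      · rw [hFv]; exact dvd_add (hud.mul_left (k - 2)) (dvd_mul_left _ 4)
      · unfold stmt12G
        rw [hmod, if_neg (by omega), if_neg (by omega), if_pos rfl, hFv,
          show (k - 2) * d + 4 * 2 ^ t - 4 * 2 ^ t = (k - 2) * d by omega, hdiv,
          show k - 2 + 2 = k by omega]
        omega
      · refine Or.inr ⟨t + 2, by omega, by omega, ?_⟩
        rw [hmod, hp2, Nat.mod_eq_of_lt (by omega)]

theorem stmt12 (a t s d b : ℕ) (ha : 1 ≤ a) (hta : a ≤ 2 ^ t) (hs : t + 4 ≤ s)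
    (hd : 2 ^ s - 2 ^ t ≤ d) (hdvd : 2 ^ t ∣ d) (hb1 : d - 3 ≤ b) (hb2 : b ≤ d) :
    ∀ n : ℕ, 1 ≤ n →
      rho {x : ℕ | (x % (b + 3) = a % (b + 3) ∨ (x + a) % (b + 3) = 0) ∧
              x ≠ a ∧ x ≠ b + 3 - a} (2 ^ t * n) ≤
      rho {y : ℕ | y % (2 * d) = 2 ^ t % (2 * d) ∨
              ∃ i, t + 1 ≤ i ∧ i ≤ s - 1 ∧ y % (2 * d) = (d + 2 ^ i) % (2 * d)}
          (2 ^ t * n) := by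
  intro n hn
  classical
  have hu : 1 ≤ 2 ^ t := Nat.one_le_two_pow
  have h16 : 16 * 2 ^ t ≤ 2 ^ s := by
    calc 16 * 2 ^ t = 2 ^ (t + 4) := by rw [pow_add]; ring
    _ ≤ 2 ^ s := Nat.pow_le_pow_right (by norm_num) hs
  have h15 : 15 * 2 ^ t ≤ d := by omega
  have hdm : d ≤ b + 3 := by omega
  have hd0 : 0 < d := by omega
  set S₀ : Set ℕ := {x : ℕ | (x % (b + 3) = a % (b + 3) ∨ (x + a) % (b + 3) = 0) ∧
      x ≠ a ∧ x ≠ b + 3 - a} with hS₀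
  set T₀ : Set ℕ := {y : ℕ | y % (2 * d) = 2 ^ t % (2 * d) ∨
      ∃ i, t + 1 ≤ i ∧ i ≤ s - 1 ∧ y % (2 * d) = (d + 2 ^ i) % (2 * d)} with hT₀
  simp only [rho, partCount]
  -- the key pointwise facts, specialized
  have key : ∀ x : ℕ, x ∈ S₀ → x ≠ (b + 3) + a →
      stmt12F a d (b + 3) (2 ^ t) x ≤ x ∧ 2 ^ t ∣ stmt12F a d (b + 3) (2 ^ t) x ∧
      0 < stmt12F a d (b + 3) (2 ^ t) x ∧ stmt12F a d (b + 3) (2 ^ t) x ≠ 2 ^ t ∧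
      stmt12G a d (b + 3) (2 ^ t) (stmt12F a d (b + 3) (2 ^ t) x) = x ∧
      (stmt12F a d (b + 3) (2 ^ t) x % (2 * d) = 2 ^ t % (2 * d) ∨
        ∃ i, t + 1 ≤ i ∧ i ≤ s - 1 ∧
          stmt12F a d (b + 3) (2 ^ t) x % (2 * d) = (d + 2 ^ i) % (2 * d)) := by
    intro x hx hne
    exact stmt12key a t s d (b + 3) ha hta hs h15 hdm hdvd x hx.1 hx.2.1 hx.2.2 hne
  -- the multiset-level map
  set F := stmt12F a d (b + 3) (2 ^ t) with hF
  set G := stmt12G a d (b + 3) (2 ^ t) with hG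
  set N := 2 ^ t * n with hN
  have hNdvd : 2 ^ t ∣ N := dvd_mul_right _ _
  set Φ : Multiset ℕ → Multiset ℕ := fun P =>
    (P.filter (· ≠ (b + 3) + a)).map F +
      Multiset.replicate ((N - ((P.filter (· ≠ (b + 3) + a)).map F).sum) / 2 ^ t) (2 ^ t)
    with hΦ
  -- basic facts about Φ on partitions with parts in S₀
  have hmem_big : ∀ (P : Multiset ℕ), (∀ i ∈ P, i ∈ S₀) →
      ∀ y ∈ (P.filter (· ≠ (b + 3) + a)).map F,
        ∃ x ∈ P.filter (· ≠ (b + 3) + a), y = F x ∧ x ∈ S₀ ∧ x ≠ (b + 3) + a := by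
    intro P hP y hy
    obtain ⟨x, hx, rfl⟩ := Multiset.mem_map.1 hy
    have hx1 := Multiset.mem_filter.1 hx
    exact ⟨x, hx, rfl, hP x hx1.1, hx1.2⟩
  have hsum_big_le : ∀ (P : Multiset ℕ), (∀ i ∈ P, i ∈ S₀) →
      ((P.filter (· ≠ (b + 3) + a)).map F).sum ≤ P.sum := by
    intro P hP
    refine le_trans (stmt12_sum_map_le F _ ?_) (stmt12_sum_filter_le _ P)
    intro x hx
    have hx1 := Multiset.mem_filter.1 hx
    exact (key x (hP x hx1.1) hx1.2).1
  have hdvd_big : ∀ (P : Multiset ℕ), (∀ i ∈ P, i ∈ S₀) →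
      2 ^ t ∣ ((P.filter (· ≠ (b + 3) + a)).map F).sum := by
    intro P hP
    refine Multiset.dvd_sum ?_
    intro y hy
    obtain ⟨x, hx, rfl, hxS, hxne⟩ := hmem_big P hP y hy
    exact (key x hxS hxne).2.1
  have hΦsum : ∀ (p : N.Partition), (∀ i ∈ p.parts, i ∈ S₀) → (Φ p.parts).sum = N := by
    intro p hp
    have h1 := hsum_big_le p.parts hp
    rw [p.parts_sum] at h1
    have h2 := hdvd_big p.parts hp
    rw [hΦ]
    simp only [Multiset.sum_add, Multiset.sum_replicate, smul_eq_mul]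
    rw [Nat.div_mul_cancel (Nat.dvd_sub hNdvd h2)]
    omega
  have hΦpos : ∀ (p : N.Partition), (∀ i ∈ p.parts, i ∈ S₀) →
      ∀ y ∈ Φ p.parts, 0 < y := by
    intro p hp y hy
    rw [hΦ] at hy
    rcases Multiset.mem_add.1 hy with hy | hy
    · obtain ⟨x, hx, rfl, hxS, hxne⟩ := hmem_big p.parts hp y hy
      exact (key x hxS hxne).2.2.1
    · rw [Multiset.eq_of_mem_replicate hy]; omega
  have hΦT : ∀ (p : N.Partition), (∀ i ∈ p.parts, i ∈ S₀) →
      ∀ y ∈ Φ p.parts, y ∈ T₀ := by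
    intro p hp y hy
    rw [hΦ] at hy
    rcases Multiset.mem_add.1 hy with hy | hy
    · obtain ⟨x, hx, rfl, hxS, hxne⟩ := hmem_big p.parts hp y hy
      exact (key x hxS hxne).2.2.2.2.2
    · rw [Multiset.eq_of_mem_replicate hy]
      exact Or.inl rfl
  -- assemble the injection
  refine Nat.card_le_card_of_injective
    (fun p => ⟨Nat.Partition.ofSums N (Φ p.1.parts) (hΦsum p.1 p.2), ?_⟩) ?_
  · -- membership in T₀
    intro i hi
    simp only [Nat.Partition.ofSums_parts] at hi
    exact hΦT p.1 p.2 i (Multiset.mem_of_mem_filter hi)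
  · -- injectivity
    intro p q hpq
    have hparts : Φ p.1.parts = Φ q.1.parts := by
      have h1 := congrArg (fun z => z.1.parts) hpq
      simp only [Nat.Partition.ofSums_parts] at h1
      rwa [Multiset.filter_eq_self.2 (fun y hy => by
          have := hΦpos p.1 p.2 y hy; omega),
        Multiset.filter_eq_self.2 (fun y hy => by
          have := hΦpos q.1 q.2 y hy; omega)] at h1
    -- recover the big parts
    have hbig : (p.1.parts.filter (· ≠ (b + 3) + a)).map F =
        (q.1.parts.filter (· ≠ (b + 3) + a)).map F := by
      have hrep : ∀ c : ℕ,
          Multiset.filter (· ≠ 2 ^ t) (Multiset.replicate c (2 ^ t)) = 0 :=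
        fun c => Multiset.filter_eq_nil.2 (fun y hy => by
          rw [Multiset.eq_of_mem_replicate hy]; simp)
      have hself : ∀ (P : Multiset ℕ), (∀ i ∈ P, i ∈ S₀) →
          Multiset.filter (· ≠ 2 ^ t) ((P.filter (· ≠ (b + 3) + a)).map F) =
            (P.filter (· ≠ (b + 3) + a)).map F := by
        intro P hP
        refine Multiset.filter_eq_self.2 ?_
        intro y hy
        obtain ⟨x, hx, rfl, hxS, hxne⟩ := hmem_big P hP y hy
        exact (key x hxS hxne).2.2.2.1
      have h2 := congrArg (Multiset.filter (· ≠ 2 ^ t)) hparts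
      rw [hΦ] at h2
      simp only [Multiset.filter_add] at h2
      rwa [hself p.1.parts p.2, hself q.1.parts q.2, hrep, hrep, add_zero,
        add_zero] at h2
    -- recover the filtered parts via G
    have hrec : ∀ (P : Multiset ℕ), (∀ i ∈ P, i ∈ S₀) →
        ((P.filter (· ≠ (b + 3) + a)).map F).map G = P.filter (· ≠ (b + 3) + a) := by
      intro P hP
      rw [Multiset.map_map]
      calc (P.filter (· ≠ (b + 3) + a)).map (G ∘ F)
          = (P.filter (· ≠ (b + 3) + a)).map id := by
            refine Multiset.map_congr rfl ?_
            intro x hx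
            have hx1 := Multiset.mem_filter.1 hx
            exact (key x (hP x hx1.1) hx1.2).2.2.2.2.1
        _ = P.filter (· ≠ (b + 3) + a) := Multiset.map_id _
    have hfilter : p.1.parts.filter (· ≠ (b + 3) + a) =
        q.1.parts.filter (· ≠ (b + 3) + a) := by
      rw [← hrec p.1.parts p.2, ← hrec q.1.parts q.2, hbig]
    -- recover the multiplicity of the part (b+3)+a from the total sum
    have hvpos : 0 < (b + 3) + a := by omega
    have hsum_split : ∀ (r : N.Partition),
        (r.parts.filter (· ≠ (b + 3) + a)).sum +
          r.parts.count ((b + 3) + a) * ((b + 3) + a) = N := by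
      intro r
      have := stmt12_split ((b + 3) + a) r.parts
      have hs2 := congrArg Multiset.sum this
      rwa [Multiset.sum_add, Multiset.sum_replicate, smul_eq_mul, r.parts_sum] at hs2
    have hcount : p.1.parts.count ((b + 3) + a) = q.1.parts.count ((b + 3) + a) := by
      have h1 := hsum_split p.1
      have h2 := hsum_split q.1
      rw [hfilter] at h1
      have : p.1.parts.count ((b + 3) + a) * ((b + 3) + a) =
          q.1.parts.count ((b + 3) + a) * ((b + 3) + a) := by omega
      exact Nat.eq_of_mul_eq_mul_right hvpos this
    have hPQ : p.1.parts = q.1.parts := by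
      rw [← stmt12_split ((b + 3) + a) p.1.parts, ← stmt12_split ((b + 3) + a) q.1.parts,
        hfilter, hcount]
    exact Subtype.ext (Nat.Partition.ext hPQ)
end

section
/- For d ≥ 62 even and n' ≥ 1, Q_{d-1}^{(2,-)}(2n') ≥ Q_d^{(2,-)}(2n'). -/
namespace Stmt13Aux

/-- loss of a part -/
def pl (d i : ℕ) : ℕ := (i + 2) / (d + 3)
/-- image of a part -/
def pg (d i : ℕ) : ℕ := i - pl d i
/-- inverse of `pg` on good parts -/
def ph (d j : ℕ) : ℕ := j + (j + 2) / (d + 2)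

lemma pl_two {d : ℕ} (hd : 62 ≤ d) : pl d 2 = 0 := by
  unfold pl; rw [Nat.div_eq_of_lt (by omega)]

lemma pg_two {d : ℕ} (hd : 62 ≤ d) : pg d 2 = 2 := by
  unfold pg; rw [pl_two hd]

lemma Acases {d i : ℕ} (hd : 62 ≤ d) (hpos : 0 < i)
    (h1 : congMod d 2 i) (h2 : i ≠ d + 1) :
    i = 2 ∨ (∃ k, 1 ≤ k ∧ i = (d + 3) * k + 2) ∨ (∃ k, 2 ≤ k ∧ i + 2 = (d + 3) * k) := by
  rcases h1 with h | h
  · rw [Nat.mod_eq_of_lt (by omega : 2 < d + 3)] at h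
    rcases Nat.lt_or_ge i (d + 3) with hlt | hge
    · rw [Nat.mod_eq_of_lt hlt] at h; left; exact h
    · right; left
      refine ⟨i / (d + 3), Nat.one_le_div_iff (by omega) |>.mpr hge, ?_⟩
      conv_lhs => rw [← Nat.div_add_mod i (d + 3), h]
  · right; right
    obtain ⟨k, hk⟩ := Nat.dvd_of_mod_eq_zero h
    match k, hk with
    | 0, hk => omega
    | 1, hk => omega
    | (k+2), hk => exact ⟨k + 2, by omega, hk⟩

lemma key {d i : ℕ} (hd : 62 ≤ d) (hde : Even d) (hpos : 0 < i)
    (h1 : congMod d 2 i) (h2 : i ≠ d + 1) :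
    pl d i ≤ i ∧ 0 < pg d i ∧ i % 2 = pl d i % 2 ∧
    congMod (d - 1) 2 (pg d i) ∧ pg d i ≠ d ∧
    ph d (pg d i) = i ∧
    (pg d i = 2 → i = 2) := by
  obtain ⟨e, he⟩ := hde
  have hd2 : d - 1 + 3 = d + 2 := by omega
  unfold ph
  rcases Acases hd hpos h1 h2 with rfl | ⟨k, hk, rfl⟩ | ⟨k, hk, hik⟩
  · rw [pg_two hd, pl_two hd]
    refine ⟨by omega, by omega, by omega, Or.inl rfl, by omega, ?_, fun _ => rfl⟩
    rw [Nat.div_eq_of_lt (by omega)]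
  · have hb : (d + 3) * k = (d + 2) * k + k := by ring
    have hpl : pl d ((d + 3) * k + 2) = k := by
      unfold pl
      rw [show (d + 3) * k + 2 + 2 = (d + 3) * k + 4 by omega,
        Nat.mul_add_div (by omega), Nat.div_eq_of_lt (by omega)]
      omega
    have hpg : pg d ((d + 3) * k + 2) = (d + 2) * k + 2 := by
      unfold pg; rw [hpl]; omega
    obtain ⟨m, hm⟩ : ∃ m, (d + 2) * k = 2 * m := ⟨(e + 1) * k, by rw [he]; ring⟩
    have hdk : d + 2 ≤ (d + 2) * k := Nat.le_mul_of_pos_right _ hk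
    rw [hpg, hpl]
    refine ⟨by omega, by omega, by omega, ?_, by omega, ?_, by omega⟩
    · exact Or.inl (by rw [hd2, add_comm, Nat.add_mul_mod_self_left])
    · rw [show (d + 2) * k + 2 + 2 = (d + 2) * k + 4 by omega,
        Nat.mul_add_div (by omega), Nat.div_eq_of_lt (by omega)]
      omega
  · have hb : (d + 3) * k = (d + 2) * k + k := by ring
    have hpl : pl d i = k := by
      unfold pl; rw [hik, Nat.mul_div_cancel_left _ (by omega : 0 < d + 3)]
    have hdk : (d + 2) * 2 ≤ (d + 2) * k := Nat.mul_le_mul_left _ hk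
    have hpg : pg d i + 2 = (d + 2) * k := by unfold pg; rw [hpl]; omega
    obtain ⟨m, hm⟩ : ∃ m, (d + 2) * k = 2 * m := ⟨(e + 1) * k, by rw [he]; ring⟩
    rw [hpl]
    refine ⟨by omega, by omega, by omega, ?_, by omega, ?_, by omega⟩
    · refine Or.inr ?_
      rw [hd2, hpg, Nat.mul_mod_right]
    · rw [hpg, Nat.mul_div_cancel_left _ (by omega : 0 < d + 2)]
      omega

/-- the multiset of parts of the image partition -/
def Fparts (d : ℕ) (s : Multiset ℕ) : Multiset ℕ :=
  s.map (pg d) + Multiset.replicate ((s.map (pl d)).sum / 2) 2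

variable {d : ℕ} {s : Multiset ℕ}

/-- hypothesis on the source multiset -/
def GoodA (d : ℕ) (s : Multiset ℕ) : Prop :=
  ∀ i ∈ s, 0 < i ∧ congMod d 2 i ∧ i ≠ d + 1

lemma sum_mod2 {s : Multiset ℕ} (h : ∀ x ∈ s, x % 2 = 0) : s.sum % 2 = 0 := by
  induction s using Multiset.induction with
  | empty => simp
  | cons a s ih =>
    rw [Multiset.sum_cons]
    have h1 := h a (Multiset.mem_cons_self a s)
    have h2 := ih fun x hx => h x (Multiset.mem_cons_of_mem hx)
    omega

lemma FL (hd : 62 ≤ d) (hde : Even d) (hA : GoodA d s) :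
    (s.map (pg d)).sum + (s.map (pl d)).sum = s.sum ∧
    ((s.map (pl d)).sum + s.sum) % 2 = 0 := by
  constructor
  · rw [← Multiset.sum_map_add]
    conv_rhs => rw [← Multiset.map_id' s]
    refine congrArg _ (Multiset.map_congr rfl fun i hi => ?_)
    obtain ⟨hpos, h1, h2⟩ := hA i hi
    have := (key hd hde hpos h1 h2).1
    unfold pg; omega
  · have : ((s.map fun i => pl d i + i).sum) % 2 = 0 := by
      refine sum_mod2 fun x hx => ?_
      obtain ⟨i, hi, rfl⟩ := Multiset.mem_map.mp hx
      obtain ⟨hpos, h1, h2⟩ := hA i hi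
      have := (key hd hde hpos h1 h2).2.2.1
      omega
    rwa [Multiset.sum_map_add, Multiset.map_id'] at this

lemma Fsum (hd : 62 ≤ d) (hde : Even d) (hA : GoodA d s) {n : ℕ} (hs : s.sum = 2 * n) :
    (Fparts d s).sum = 2 * n := by
  obtain ⟨h1, h2⟩ := FL hd hde hA
  unfold Fparts
  rw [Multiset.sum_add, Multiset.sum_replicate, smul_eq_mul]
  omega

lemma Fpos (hd : 62 ≤ d) (hde : Even d) (hA : GoodA d s) :
    ∀ i ∈ Fparts d s, 0 < i := by
  intro i hi
  rcases Multiset.mem_add.mp hi with hi | hi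
  · obtain ⟨j, hj, rfl⟩ := Multiset.mem_map.mp hi
    obtain ⟨hpos, h1, h2⟩ := hA j hj
    exact (key hd hde hpos h1 h2).2.1
  · rw [Multiset.eq_of_mem_replicate hi]; omega

lemma FmemB (hd : 62 ≤ d) (hde : Even d) (hA : GoodA d s) :
    ∀ i ∈ Fparts d s, congMod (d - 1) 2 i ∧ i ≠ d - 1 + 3 - 2 := by
  have hdd : d - 1 + 3 - 2 = d := by omega
  intro i hi
  rw [hdd]
  rcases Multiset.mem_add.mp hi with hi | hi
  · obtain ⟨j, hj, rfl⟩ := Multiset.mem_map.mp hi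
    obtain ⟨hpos, h1, h2⟩ := hA j hj
    exact ⟨(key hd hde hpos h1 h2).2.2.2.1, (key hd hde hpos h1 h2).2.2.2.2.1⟩
  · rw [Multiset.eq_of_mem_replicate hi]
    refine ⟨Or.inl ?_, by omega⟩
    rw [Nat.mod_eq_of_lt (by omega)]
  -- note : `2 % (d-1+3) = 2 % (d-1+3)` may just be rfl; handled above

lemma Ffilter (hd : 62 ≤ d) (hde : Even d) (hA : GoodA d s) :
    ((Fparts d s).filter (fun a => ¬ a = 2)).map (ph d)
      = s.filter (fun a => ¬ a = 2) := by
  unfold Fparts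
  rw [Multiset.filter_add, Multiset.filter_map]
  have hrep : (Multiset.replicate ((s.map (pl d)).sum / 2) 2).filter
      (fun a => ¬ a = 2) = 0 := by
    rw [Multiset.filter_eq_nil]
    intro a ha
    rw [Multiset.eq_of_mem_replicate ha]
    simp
  rw [hrep, add_zero]
  have hfc : s.filter ((fun a => ¬ a = 2) ∘ pg d) = s.filter (fun a => ¬ a = 2) := by
    refine Multiset.filter_congr fun i hi => ?_
    obtain ⟨hpos, h1, h2⟩ := hA i hi
    have h7 := (key hd hde hpos h1 h2).2.2.2.2.2.2
    constructor
    · intro hne he; exact hne (by rw [he, pg_two hd])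
    · intro hne he; exact hne (h7 he)
  rw [hfc, Multiset.map_map]
  conv_rhs => rw [← Multiset.map_id' (s.filter _)]
  refine Multiset.map_congr rfl fun i hi => ?_
  have hi' := Multiset.mem_of_mem_filter hi
  obtain ⟨hpos, h1, h2⟩ := hA i hi'
  exact (key hd hde hpos h1 h2).2.2.2.2.2.1

lemma Finj (hd : 62 ≤ d) (hde : Even d) {s₁ s₂ : Multiset ℕ}
    (hA₁ : GoodA d s₁) (hA₂ : GoodA d s₂) {n : ℕ}
    (hs₁ : s₁.sum = n) (hs₂ : s₂.sum = n)
    (h : Fparts d s₁ = Fparts d s₂) : s₁ = s₂ := by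
  have hft : s₁.filter (fun a => ¬ a = 2) = s₂.filter (fun a => ¬ a = 2) := by
    rw [← Ffilter hd hde hA₁, ← Ffilter hd hde hA₂, h]
  have he₁ := Multiset.filter_add_not (fun a => a = 2) s₁
  have he₂ := Multiset.filter_add_not (fun a => a = 2) s₂
  have hq₁ : s₁.filter (fun a => a = 2) = Multiset.replicate (s₁.count 2) 2 := by
    rw [← Multiset.filter_eq']
  have hq₂ : s₂.filter (fun a => a = 2) = Multiset.replicate (s₂.count 2) 2 := by
    rw [← Multiset.filter_eq']
  have hc : s₁.count 2 = s₂.count 2 := by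
    have t₁ : s₁.sum = (s₁.count 2) * 2 + (s₁.filter (fun a => ¬ a = 2)).sum := by
      conv_lhs => rw [← he₁]
      rw [Multiset.sum_add, hq₁, Multiset.sum_replicate, smul_eq_mul]
    have t₂ : s₂.sum = (s₂.count 2) * 2 + (s₂.filter (fun a => ¬ a = 2)).sum := by
      conv_lhs => rw [← he₂]
      rw [Multiset.sum_add, hq₂, Multiset.sum_replicate, smul_eq_mul]
    rw [hft] at t₁
    omega
  rw [← he₁, ← he₂, hq₁, hq₂, hc, hft]

end Stmt13Aux

theorem stmt13 (d n' : ℕ) (hd : 62 ≤ d) (hde : Even d) (hn : 1 ≤ n') :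
    Qdash d 2 (2 * n') ≤ Qdash (d - 1) 2 (2 * n') := by
  classical
  rw [Qdash, Qdash, partCount, partCount]
  refine Nat.card_le_card_of_injective
    (fun p => ⟨⟨Stmt13Aux.Fparts d p.1.parts,
      fun {i} hi => Stmt13Aux.Fpos hd hde
        (fun i hi => ⟨p.1.parts_pos hi, (p.2 i hi).1, (p.2 i hi).2⟩) i hi,
      Stmt13Aux.Fsum hd hde (fun i hi => ⟨p.1.parts_pos hi, (p.2 i hi).1, (p.2 i hi).2⟩)
        p.1.parts_sum⟩,
      Stmt13Aux.FmemB hd hde (fun i hi => ⟨p.1.parts_pos hi, (p.2 i hi).1, (p.2 i hi).2⟩)⟩)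
    ?_
  intro p₁ p₂ h
  have h' : Stmt13Aux.Fparts d p₁.1.parts = Stmt13Aux.Fparts d p₂.1.parts :=
    congrArg (fun x => (Subtype.val x).parts) h
  refine Subtype.ext (Nat.Partition.ext ?_)
  exact Stmt13Aux.Finj hd hde
    (fun i hi => ⟨p₁.1.parts_pos hi, (p₁.2 i hi).1, (p₁.2 i hi).2⟩)
    (fun i hi => ⟨p₂.1.parts_pos hi, (p₂.2 i hi).1, (p₂.2 i hi).2⟩)
    p₁.1.parts_sum p₂.1.parts_sum h'
end

section
/- For d ≥ 62 even and n' ≥ 1, Q_{d-1}^{(2,-)}(2n') ≥ Q_d^{(2,-)}(2n' − 1). -/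
def pf14kv (M p : ℕ) : ℕ := if (p + 2) % M = 0 then (p + 2) / M else p / M

def pf14g (d p : ℕ) : ℕ := p - pf14kv (d + 3) p

def pf14g' (d q : ℕ) : ℕ := q + pf14kv (d + 2) q

lemma pf14_kv_plus {M k : ℕ} (hM : 5 ≤ M) : pf14kv M (k * M + 2) = k := by
  unfold pf14kv
  have h4 : (k * M + 2 + 2) % M = 4 := by
    have he : k * M + 2 + 2 = M * k + 4 := by ring
    rw [he, Nat.mul_add_mod]
    exact Nat.mod_eq_of_lt (by omega)
  rw [if_neg (by omega)]
  have he : k * M + 2 = M * k + 2 := by ring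
  rw [he, Nat.mul_add_div (by omega), Nat.div_eq_of_lt (by omega), add_zero]

lemma pf14_kv_minus {M k p : ℕ} (hM : 5 ≤ M) (hp : p + 2 = k * M) : pf14kv M p = k := by
  unfold pf14kv
  rw [hp, if_pos (Nat.mul_mod_left k M), Nat.mul_div_cancel _ (by omega)]

lemma pf14_kv_two {M : ℕ} (hM : 5 ≤ M) : pf14kv M 2 = 0 := by
  have := pf14_kv_plus (k := 0) hM
  simpa using this

lemma pf14_main {d p : ℕ} (hd : 62 ≤ d) (hde : Even d) (hpos : 0 < p)
    (h1 : congMod d 2 p) (h2 : p ≠ d + 1) :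
    pf14g d p + pf14kv (d + 3) p = p ∧ pf14g d p % 2 = 0 ∧ 0 < pf14g d p ∧
    congMod (d - 1) 2 (pf14g d p) ∧ pf14g d p ≠ d ∧ (pf14g d p = 2 ↔ p = 2) ∧
    pf14g' d (pf14g d p) = p := by
  have hM3 : 5 ≤ d + 3 := by omega
  have hM2 : 5 ≤ d + 2 := by omega
  have hd2even : (d + 2) % 2 = 0 := by
    rcases hde with ⟨r, hr⟩; omega
  have hd13 : d - 1 + 3 = d + 2 := by omega
  rcases h1 with h | h
  · -- p = k*(d+3)+2
    have h2m : (2 : ℕ) % (d + 3) = 2 := Nat.mod_eq_of_lt (by omega)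
    have hdm := Nat.div_add_mod p (d + 3)
    rw [h, h2m] at hdm
    set k := p / (d + 3) with hkdef
    have hp : k * (d + 3) + 2 = p := by rw [mul_comm]; exact hdm
    have hkv : pf14kv (d + 3) p = k := by rw [← hp]; exact pf14_kv_plus hM3
    have h' : k * (d + 3) = k * (d + 2) + k := by ring
    have hg : pf14g d p = k * (d + 2) + 2 := by
      unfold pf14g; rw [hkv]
      clear hkdef hdm
      generalize k * (d + 2) = B at *
      generalize k * (d + 3) = C at *
      omega
    have hkb : (k * (d + 2) = 0 ∧ k * (d + 3) = 0 ∧ k = 0) ∨ (d + 2 ≤ k * (d + 2) ∧ 1 ≤ k) := by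
      rcases Nat.eq_zero_or_pos k with h0 | h0
      · left; simp [h0]
      · exact Or.inr ⟨Nat.le_mul_of_pos_left (d + 2) h0, h0⟩
    refine ⟨?_, ?_, ?_, ?_, ?_, ?_, ?_⟩
    · rw [hg, hkv]
      clear hkdef hdm hg
      generalize k * (d + 2) = B at *
      generalize k * (d + 3) = C at *
      omega
    · rw [hg, Nat.add_mod, Nat.mul_mod, hd2even]; simp
    · rw [hg]; positivity
    · unfold congMod
      rw [hd13, hg]
      left
      rw [Nat.add_comm, Nat.add_mul_mod_self_right]
    · rw [hg]
      clear hkdef hdm hg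
      generalize k * (d + 2) = B at *
      generalize k * (d + 3) = C at *
      omega
    · rw [hg]
      clear hkdef hdm hg
      generalize k * (d + 2) = B at *
      generalize k * (d + 3) = C at *
      omega
    · unfold pf14g'
      rw [hg, pf14_kv_plus hM2]
      clear hkdef hdm hg
      generalize k * (d + 2) = B at *
      generalize k * (d + 3) = C at *
      omega
  · -- p + 2 = k*(d+3)
    obtain ⟨k, hk⟩ : ∃ k, p + 2 = k * (d + 3) :=
      ⟨(p + 2) / (d + 3), (Nat.div_mul_cancel (Nat.dvd_of_mod_eq_zero h)).symm⟩
    have hk1 : 1 ≤ k := by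
      rcases Nat.eq_zero_or_pos k with h0 | h0
      · subst h0; omega
      · exact h0
    have hk2 : 2 ≤ k := by
      by_contra hcon
      have hk1' : k = 1 := by omega
      subst hk1'
      exact h2 (by omega)
    have hkv : pf14kv (d + 3) p = k := pf14_kv_minus hM3 hk
    have h' : k * (d + 3) = k * (d + 2) + k := by ring
    have hb : 2 * (d + 2) ≤ k * (d + 2) := Nat.mul_le_mul_right (d + 2) hk2
    have he : (k * (d + 2)) % 2 = 0 := by rw [Nat.mul_mod, hd2even]; simp
    have hg : pf14g d p = k * (d + 2) - 2 := by
      unfold pf14g; rw [hkv]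
      generalize k * (d + 2) = B at *
      generalize k * (d + 3) = C at *
      omega
    refine ⟨?_, ?_, ?_, ?_, ?_, ?_, ?_⟩
    · rw [hg, hkv]
      clear hg
      generalize k * (d + 2) = B at *
      generalize k * (d + 3) = C at *
      omega
    · rw [hg]
      clear hg
      generalize k * (d + 2) = B at *
      omega
    · rw [hg]
      clear hg
      generalize k * (d + 2) = B at *
      omega
    · unfold congMod
      rw [hd13, hg]
      right
      have h22 : k * (d + 2) - 2 + 2 = k * (d + 2) := by
        clear hg; generalize k * (d + 2) = B at *; omega
      rw [h22, Nat.mul_mod_left]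
    · rw [hg]
      clear hg
      generalize k * (d + 2) = B at *
      omega
    · rw [hg]
      clear hg
      generalize k * (d + 2) = B at *
      generalize k * (d + 3) = C at *
      omega
    · unfold pf14g'
      rw [hg]
      have hkv2 : pf14kv (d + 2) (k * (d + 2) - 2) = k := by
        apply pf14_kv_minus hM2
        clear hg; generalize k * (d + 2) = B at *; omega
      rw [hkv2]
      clear hg hkv2
      generalize k * (d + 2) = B at *
      generalize k * (d + 3) = C at *
      omega

lemma pf14_sum_even (s : Multiset ℕ) (h : ∀ x ∈ s, x % 2 = 0) : s.sum % 2 = 0 := by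
  induction s using Multiset.induction with
  | empty => simp
  | cons a t ih =>
    simp only [Multiset.sum_cons]
    have ha := h a (Multiset.mem_cons_self a t)
    have ht := ih (fun x hx => h x (Multiset.mem_cons_of_mem hx))
    omega

def pf14step (d : ℕ) (s : Multiset ℕ) : Multiset ℕ :=
  s.map (pf14g d) + Multiset.replicate (((s.map (pf14kv (d + 3))).sum + 1) / 2) 2

lemma pf14_step_props (d : ℕ) (hd : 62 ≤ d) (hde : Even d) (s : Multiset ℕ)
    (hval : ∀ i ∈ s, 0 < i ∧ congMod d 2 i ∧ i ≠ d + 1) (hodd : s.sum % 2 = 1) :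
    (pf14step d s).sum = s.sum + 1 ∧ (∀ i ∈ pf14step d s, 0 < i) ∧
    (∀ i ∈ pf14step d s, congMod (d - 1) 2 i ∧ i ≠ d) := by
  have hmain := fun i hi => pf14_main hd hde (hval i hi).1 (hval i hi).2.1 (hval i hi).2.2
  have hsum1 : (s.map (pf14g d)).sum + (s.map (pf14kv (d + 3))).sum = s.sum := by
    rw [← Multiset.sum_map_add]
    have he : s.map (fun i => pf14g d i + pf14kv (d + 3) i) = s.map id :=
      Multiset.map_congr rfl (fun i hi => (hmain i hi).1)
    rw [he, Multiset.map_id]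
  have heven : (s.map (pf14g d)).sum % 2 = 0 := by
    apply pf14_sum_even
    intro x hx
    rw [Multiset.mem_map] at hx
    obtain ⟨i, hi, rfl⟩ := hx
    exact (hmain i hi).2.1
  refine ⟨?_, ?_, ?_⟩
  · simp only [pf14step, Multiset.sum_add, Multiset.sum_replicate, smul_eq_mul]
    omega
  · intro i hi
    simp only [pf14step, Multiset.mem_add] at hi
    rcases hi with hi | hi
    · rw [Multiset.mem_map] at hi
      obtain ⟨j, hj, rfl⟩ := hi
      exact (hmain j hj).2.2.1
    · rw [Multiset.eq_of_mem_replicate hi]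
      norm_num
  · intro i hi
    simp only [pf14step, Multiset.mem_add] at hi
    rcases hi with hi | hi
    · rw [Multiset.mem_map] at hi
      obtain ⟨j, hj, rfl⟩ := hi
      exact ⟨(hmain j hj).2.2.2.1, (hmain j hj).2.2.2.2.1⟩
    · rw [Multiset.eq_of_mem_replicate hi]
      exact ⟨Or.inl rfl, by omega⟩

lemma pf14_count_map_two (f : ℕ → ℕ) (s : Multiset ℕ) (h : ∀ a ∈ s, f a = 2 ↔ a = 2) :
    Multiset.count 2 (s.map f) = Multiset.count 2 s := by
  induction s using Multiset.induction with
  | empty => simp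
  | cons a t ih =>
    have ha := h a (Multiset.mem_cons_self a t)
    have ht := ih (fun x hx => h x (Multiset.mem_cons_of_mem hx))
    simp only [Multiset.map_cons, Multiset.count_cons]
    rw [ht]
    by_cases h2 : a = 2
    · rw [if_pos h2.symm, if_pos (ha.mpr h2).symm]
    · rw [if_neg (fun hc => h2 (ha.mp hc.symm)), if_neg (fun hc => h2 hc.symm)]

lemma pf14_step_inj (d : ℕ) (hd : 62 ≤ d) (hde : Even d) (s1 s2 : Multiset ℕ)
    (hv1 : ∀ i ∈ s1, 0 < i ∧ congMod d 2 i ∧ i ≠ d + 1)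
    (hv2 : ∀ i ∈ s2, 0 < i ∧ congMod d 2 i ∧ i ≠ d + 1)
    (h : pf14step d s1 = pf14step d s2) : s1 = s2 := by
  classical
  have key : ∀ (s : Multiset ℕ), (∀ i ∈ s, 0 < i ∧ congMod d 2 i ∧ i ≠ d + 1) →
      Multiset.filter (fun x => ¬ x = 2) (pf14step d s)
        = (Multiset.filter (fun x => ¬ x = 2) s).map (pf14g d) ∧
      Multiset.count 2 (pf14step d s)
        = Multiset.count 2 s + ((s.map (pf14kv (d + 3))).sum + 1) / 2 ∧
      (s.map (pf14kv (d + 3))).sum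
        = ((Multiset.filter (fun x => ¬ x = 2) s).map (pf14kv (d + 3))).sum ∧
      s = Multiset.replicate (Multiset.count 2 s) 2 + Multiset.filter (fun x => ¬ x = 2) s := by
    intro s hv
    have hmain := fun i hi => pf14_main hd hde (hv i hi).1 (hv i hi).2.1 (hv i hi).2.2
    have hdecomp : s = Multiset.replicate (Multiset.count 2 s) 2
        + Multiset.filter (fun x => ¬ x = 2) s := by
      conv_lhs => rw [← Multiset.filter_add_not (fun x => x = 2) s]
      rw [Multiset.filter_eq']
    refine ⟨?_, ?_, ?_, hdecomp⟩
    · simp only [pf14step, Multiset.filter_add]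
      have hrep : Multiset.filter (fun x => ¬ x = 2)
          (Multiset.replicate (((s.map (pf14kv (d + 3))).sum + 1) / 2) 2) = 0 := by
        rw [Multiset.filter_eq_nil]
        intro a ha
        rw [Multiset.eq_of_mem_replicate ha]
        simp
      rw [hrep, add_zero, Multiset.filter_map]
      congr 1
      apply Multiset.filter_congr
      intro i hi
      simp only [Function.comp]
      exact not_congr (hmain i hi).2.2.2.2.2.1
    · simp only [pf14step, Multiset.count_add, Multiset.count_replicate, if_pos rfl]
      congr 1
      apply pf14_count_map_two
      intro a ha
      exact (hmain a ha).2.2.2.2.2.1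
    · conv_lhs => rw [hdecomp]
      rw [Multiset.map_add, Multiset.sum_add, Multiset.map_replicate,
        pf14_kv_two (by omega : 5 ≤ d + 3), Multiset.sum_replicate]
      simp
  obtain ⟨hf1, hc1, hK1, hd1⟩ := key s1 hv1
  obtain ⟨hf2, hc2, hK2, hd2⟩ := key s2 hv2
  have hmain1 := fun i hi => pf14_main hd hde (hv1 i hi).1 (hv1 i hi).2.1 (hv1 i hi).2.2
  have hmain2 := fun i hi => pf14_main hd hde (hv2 i hi).1 (hv2 i hi).2.1 (hv2 i hi).2.2
  have ht : (Multiset.filter (fun x => ¬ x = 2) s1).map (pf14g d)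
      = (Multiset.filter (fun x => ¬ x = 2) s2).map (pf14g d) := by
    rw [← hf1, ← hf2, h]
  have hrecov : ∀ (s : Multiset ℕ),
      (∀ i ∈ s, 0 < i ∧ congMod d 2 i ∧ i ≠ d + 1) →
      ((Multiset.filter (fun x => ¬ x = 2) s).map (pf14g d)).map (pf14g' d)
        = Multiset.filter (fun x => ¬ x = 2) s := by
    intro s hv
    have hmain := fun i hi => pf14_main hd hde (hv i hi).1 (hv i hi).2.1 (hv i hi).2.2
    rw [Multiset.map_map]
    have he : (Multiset.filter (fun x => ¬ x = 2) s).map (pf14g' d ∘ pf14g d)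
        = (Multiset.filter (fun x => ¬ x = 2) s).map id := by
      apply Multiset.map_congr rfl
      intro i hi
      simp only [Function.comp, id]
      exact (hmain i (Multiset.mem_of_mem_filter hi)).2.2.2.2.2.2
    rw [he, Multiset.map_id]
  have ht' : Multiset.filter (fun x => ¬ x = 2) s1 = Multiset.filter (fun x => ¬ x = 2) s2 := by
    rw [← hrecov s1 hv1, ← hrecov s2 hv2, ht]
  have hKeq : (s1.map (pf14kv (d + 3))).sum = (s2.map (pf14kv (d + 3))).sum := by
    rw [hK1, hK2, ht']
  have hcnt : Multiset.count 2 s1 = Multiset.count 2 s2 := by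
    have hcc := congrArg (Multiset.count 2) h
    rw [hc1, hc2, hKeq] at hcc
    omega
  rw [hd1, hd2, ht', hcnt]

theorem stmt14 (d n' : ℕ) (hd : 62 ≤ d) (hde : Even d) (hn : 1 ≤ n') :
    Qdash d 2 (2 * n' - 1) ≤ Qdash (d - 1) 2 (2 * n') := by
  simp only [Qdash, partCount]
  have hval : ∀ (x : {p : (2 * n' - 1).Partition //
      ∀ i ∈ p.parts, congMod d 2 i ∧ i ≠ d + 3 - 2}),
      ∀ i ∈ x.1.parts, 0 < i ∧ congMod d 2 i ∧ i ≠ d + 1 := by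
    intro x i hi
    refine ⟨x.1.parts_pos hi, (x.2 i hi).1, ?_⟩
    have := (x.2 i hi).2
    omega
  have hodd : ∀ (x : {p : (2 * n' - 1).Partition //
      ∀ i ∈ p.parts, congMod d 2 i ∧ i ≠ d + 3 - 2}),
      x.1.parts.sum % 2 = 1 := by
    intro x
    rw [x.1.parts_sum]
    omega
  let f : {p : (2 * n' - 1).Partition // ∀ i ∈ p.parts, congMod d 2 i ∧ i ≠ d + 3 - 2} →
      {p : (2 * n').Partition // ∀ i ∈ p.parts, congMod (d - 1) 2 i ∧ i ≠ d - 1 + 3 - 2} :=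
    fun x =>
      ⟨⟨pf14step d x.1.parts,
        fun {i} hi => (pf14_step_props d hd hde x.1.parts (hval x) (hodd x)).2.1 i hi,
        by
          rw [(pf14_step_props d hd hde x.1.parts (hval x) (hodd x)).1, x.1.parts_sum]
          omega⟩,
       fun i hi => by
          have h := (pf14_step_props d hd hde x.1.parts (hval x) (hodd x)).2.2 i hi
          refine ⟨h.1, ?_⟩
          have := h.2
          omega⟩
  apply Nat.card_le_card_of_injective f
  intro x y hxy
  have hparts : pf14step d x.1.parts = pf14step d y.1.parts := by
    have := congrArg (fun z : {p : (2 * n').Partition //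
        ∀ i ∈ p.parts, congMod (d - 1) 2 i ∧ i ≠ d - 1 + 3 - 2} => z.1.parts) hxy
    exact this
  have hs := pf14_step_inj d hd hde x.1.parts y.1.parts (hval x) (hval y) hparts
  exact Subtype.ext (Nat.Partition.ext hs)
end

section
/- For a ≥ 4 and k ≥ 0, q_{a+k-2}^{(a)}(2a+k+1) < Q_{a+k-2}^{(a)}(2a+k+1). -/
theorem stmt16 (a k : ℕ) (ha : 4 ≤ a) :
    qpart (a + k - 2) a (2 * a + k + 1) < Qfull (a + k - 2) a (2 * a + k + 1) := by
  set d := a + k - 2 with hd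
  set n := 2 * a + k + 1 with hn
  have hm : d + 3 = a + k + 1 := by omega
  -- qpart ≤ 1
  have h1 : qpart d a n ≤ 1 := by
    rw [qpart, Finite.card_le_one_iff_subsingleton]
    constructor
    rintro ⟨p, hpa, hpc, hpd⟩ ⟨q, hqa, hqc, hqd⟩
    have key : ∀ (r : n.Partition), (∀ i ∈ r.parts, a ≤ i) →
        (∀ i : ℕ, r.parts.count i ≤ 1) →
        (∀ i ∈ r.parts, ∀ j ∈ r.parts, i ≠ j → d ≤ i - j ∨ d ≤ j - i) →
        r.parts = {n} := by
      intro r hra hrc hrd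
      have hsum := r.parts_sum
      have hcard : r.parts.card ≤ 1 := by
        by_contra hc
        push_neg at hc
        obtain ⟨i, hi⟩ : ∃ i, i ∈ r.parts := Multiset.card_pos_iff_exists_mem.mp (by omega)
        obtain ⟨t, ht⟩ := Multiset.exists_cons_of_mem hi
        have htcard : 0 < t.card := by
          have := congrArg Multiset.card ht
          simp at this; omega
        obtain ⟨j, hj⟩ : ∃ j, j ∈ t := Multiset.card_pos_iff_exists_mem.mp htcard
        obtain ⟨s, hs⟩ := Multiset.exists_cons_of_mem hj
        rw [hs] at ht
        have hij : i ≠ j := by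
          intro h
          have := hrc i
          rw [ht, h] at this
          simp [Multiset.count_cons_self] at this
        have hia : a ≤ i := hra i hi
        have hja : a ≤ j := hra j (by rw [ht]; simp)
        have hdij := hrd i hi j (by rw [ht]; simp) hij
        have hsum2 : i + j ≤ n := by
          rw [← hsum, ht]
          simp
        omega
      interval_cases h : r.parts.card
      · exfalso
        rw [Multiset.card_eq_zero] at h
        rw [h] at hsum
        simp at hsum
      · obtain ⟨x, hx⟩ := Multiset.card_eq_one.mp h
        rw [hx] at hsum ⊢
        simp at hsum
        rw [hsum]
    have hp := key p hpa hpc hpd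
    have hq := key q hqa hqc hqd
    exact Subtype.ext (Nat.Partition.ext (hp.trans hq.symm))
  -- Qfull ≥ 2
  have h2 : 2 ≤ Qfull d a n := by
    rw [Qfull, partCount]
    rw [show (2:ℕ) = 1 + 1 by rfl]
    rw [Nat.succ_le_iff, Finite.one_lt_card_iff_nontrivial]
    let p1 : n.Partition := ⟨{n}, by intro i hi; simp at hi; omega, by simp⟩
    have hp1parts : p1.parts = {n} := rfl
    let p2 : n.Partition :=
      ⟨(a ::ₘ a ::ₘ {k+1}), by intro i hi; simp at hi; rcases hi with h|h|h <;> omega,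
       by simp; omega⟩
    have hp2parts : p2.parts = (a ::ₘ a ::ₘ {k+1}) := rfl
    have hc1 : ∀ i ∈ p1.parts, congMod d a i := by
      intro i hi
      rw [hp1parts] at hi
      simp at hi
      subst hi
      left
      rw [hm]
      have : n = (a + k + 1) + a := by omega
      rw [this, Nat.add_mod_left]
    have hc2 : ∀ i ∈ p2.parts, congMod d a i := by
      intro i hi
      rw [hp2parts] at hi
      simp at hi
      rcases hi with h|h
      · subst h; left; rfl
      · subst h; right; rw [hm]
        have : k + 1 + a = a + k + 1 := by omega
        rw [this, Nat.mod_self]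
    refine ⟨⟨p1, hc1⟩, ⟨p2, hc2⟩, ?_⟩
    intro h
    have := congrArg (fun x => (Subtype.val x).parts.card) h
    simp [hp1parts, hp2parts] at this
  omega
end

section
/- For a ≥ 2, q_{3a-3}^{(2a)}(4a) − Q_{3a-3}^{(2a,-)}(4a) = −1. -/
lemma mem_le_sum {s : Multiset ℕ} {i : ℕ} (h : i ∈ s) : i ≤ s.sum := by
  obtain ⟨t, rfl⟩ := Multiset.exists_cons_of_mem h
  simp

/-- The partition of `n` with a single part (for `n > 0`). -/
def onePart (n : ℕ) (hn : 0 < n) : n.Partition :=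
  ⟨{n}, fun hi => by simpa using (Multiset.mem_singleton.mp hi) ▸ hn, by simp⟩

/-- The partition of `4*a` into two parts `2*a` (for `a > 0`). -/
def twoPart (a : ℕ) (ha : 0 < a) : (4 * a).Partition :=
  ⟨{2 * a, 2 * a}, fun hi => by
      rcases Multiset.mem_cons.mp hi with h | h
      · omega
      · have := Multiset.mem_singleton.mp h; omega,
    by simp; ring⟩

lemma qpart_eq_one (a : ℕ) (ha : 2 ≤ a) : qpart (3 * a - 3) (2 * a) (4 * a) = 1 := by
  have ha4 : 0 < 4 * a := by omega
  -- classification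
  have key : ∀ p : Nat.Partition (4 * a), (∀ i ∈ p.parts, 2 * a ≤ i) →
      (∀ i : ℕ, p.parts.count i ≤ 1) → p.parts = {4 * a} := by
    intro p h1 h2
    have hs : p.parts.sum = 4 * a := p.parts_sum
    have hne : p.parts ≠ 0 := by
      intro h; rw [h] at hs; simp at hs; omega
    obtain ⟨i, hi⟩ := Multiset.exists_mem_of_ne_zero hne
    obtain ⟨s, hs'⟩ := Multiset.exists_cons_of_mem hi
    rcases Multiset.empty_or_exists_mem s with h0 | ⟨j, hj⟩
    · rw [hs', h0] at hs
      simp at hs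
      rw [hs', h0, hs]
      rfl
    · obtain ⟨t, ht⟩ := Multiset.exists_cons_of_mem hj
      rw [hs', ht] at hs
      simp [Multiset.sum_cons] at hs
      have hia : 2 * a ≤ i := h1 i hi
      have hja : 2 * a ≤ j := h1 j (by rw [hs']; exact Multiset.mem_cons_of_mem hj)
      have hi2 : i = 2 * a := by omega
      have hj2 : j = 2 * a := by omega
      have : 2 ≤ p.parts.count (2 * a) := by
        rw [hs', ht, hi2, hj2]
        simp [Multiset.count_cons_self]
      have := h2 (2 * a)
      omega
  rw [qpart, Nat.card_eq_one_iff_unique]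
  constructor
  · constructor
    intro ⟨p, hp1, hp2, hp3⟩ ⟨q, hq1, hq2, hq3⟩
    have := key p hp1 hp2
    have := key q hq1 hq2
    exact Subtype.ext (Nat.Partition.ext (by rw [key p hp1 hp2, key q hq1 hq2]))
  · refine ⟨⟨onePart (4 * a) ha4, ?_, ?_, ?_⟩⟩
    · intro i hi
      rw [onePart] at hi
      simp at hi
      omega
    · intro i
      rw [onePart]
      simp [Multiset.count_singleton]
      split <;> omega
    · intro i hi j hj hij
      rw [onePart] at hi hj
      simp at hi hj
      omega

lemma qdash_eq_two (a : ℕ) (ha : 2 ≤ a) : Qdash (3 * a - 3) (2 * a) (4 * a) = 2 := by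
  have hd3 : 3 * a - 3 + 3 = 3 * a := by omega
  have hdb : 3 * a - 3 + 3 - 2 * a = a := by omega
  -- each admissible part is 2a or 4a
  have part_class : ∀ i, 0 < i → i ≤ 4 * a → congMod (3 * a - 3) (2 * a) i →
      i ≠ 3 * a - 3 + 3 - 2 * a → i = 2 * a ∨ i = 4 * a := by
    intro i hi0 hi4 hc hne
    rw [hdb] at hne
    rw [congMod, hd3] at hc
    rcases hc with hc | hc
    · have h2a : (2 * a) % (3 * a) = 2 * a := Nat.mod_eq_of_lt (by omega)
      rw [h2a] at hc
      have hdm := Nat.div_add_mod i (3 * a)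
      rw [hc] at hdm
      rcases Nat.eq_zero_or_pos (i / (3 * a)) with h | h
      · rw [h, Nat.mul_zero] at hdm
        left; omega
      · have hmul : 3 * a ≤ 3 * a * (i / (3 * a)) := Nat.le_mul_of_pos_right _ h
        omega
    · have hdvd : 3 * a ∣ i + 2 * a := Nat.dvd_of_mod_eq_zero hc
      obtain ⟨k, hk⟩ := hdvd
      have hk2 : k ≤ 2 := by
        by_contra h
        have : 3 * a * 3 ≤ 3 * a * k := Nat.mul_le_mul_left _ (by omega)
        omega
      interval_cases k <;> omega
  -- classification of partitions
  have key : ∀ p : Nat.Partition (4 * a),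
      (∀ i ∈ p.parts, congMod (3 * a - 3) (2 * a) i ∧ i ≠ 3 * a - 3 + 3 - 2 * a) →
      p.parts = {4 * a} ∨ p.parts = {2 * a, 2 * a} := by
    intro p hp
    have hs : p.parts.sum = 4 * a := p.parts_sum
    have hcl : ∀ i ∈ p.parts, i = 2 * a ∨ i = 4 * a := by
      intro i hi
      exact part_class i (p.parts_pos hi) (hs ▸ mem_le_sum hi) (hp i hi).1 (hp i hi).2
    by_cases h4 : 4 * a ∈ p.parts
    · left
      obtain ⟨s, hs'⟩ := Multiset.exists_cons_of_mem h4
      rw [hs'] at hs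
      simp [Multiset.sum_cons] at hs
      have hs0 : s = 0 := by
        by_contra h
        obtain ⟨j, hj⟩ := Multiset.exists_mem_of_ne_zero h
        have hjpos : 0 < j := p.parts_pos (by rw [hs']; exact Multiset.mem_cons_of_mem hj)
        have := mem_le_sum hj
        omega
      rw [hs', hs0]
      rfl
    · right
      have hall : ∀ i ∈ p.parts, i = 2 * a := by
        intro i hi
        rcases hcl i hi with h | h
        · exact h
        · exact absurd (h ▸ hi) h4
      have hrep : p.parts = Multiset.replicate (Multiset.card p.parts) (2 * a) :=
        Multiset.eq_replicate.mpr ⟨rfl, hall⟩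
      have hsum : Multiset.card p.parts * (2 * a) = 4 * a := by
        rw [hrep] at hs
        simpa [Multiset.sum_replicate] using hs
      have hcard : Multiset.card p.parts = 2 := by
        rcases Nat.lt_or_ge (Multiset.card p.parts) 2 with h | h
        · interval_cases (Multiset.card p.parts) <;> omega
        · rcases Nat.lt_or_ge (Multiset.card p.parts) 3 with h' | h'
          · omega
          · have : 3 * (2 * a) ≤ Multiset.card p.parts * (2 * a) :=
              Nat.mul_le_mul_right _ h'
            omega
      rw [hrep, hcard]
      rfl
  -- the two partitions
  have ha4 : 0 < 4 * a := by omega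
  have ha0 : 0 < a := by omega
  have hP1 : ∀ i ∈ (onePart (4 * a) ha4).parts,
      congMod (3 * a - 3) (2 * a) i ∧ i ≠ 3 * a - 3 + 3 - 2 * a := by
    intro i hi
    rw [onePart] at hi
    simp at hi
    subst hi
    refine ⟨Or.inr ?_, by omega⟩
    rw [hd3]
    have h62 : 4 * a + 2 * a = 3 * a * 2 := by ring
    rw [h62]
    exact Nat.mul_mod_right _ _
  have hP2 : ∀ i ∈ (twoPart a ha0).parts,
      congMod (3 * a - 3) (2 * a) i ∧ i ≠ 3 * a - 3 + 3 - 2 * a := by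
    intro i hi
    rw [twoPart] at hi
    simp at hi
    subst hi
    exact ⟨Or.inl rfl, by omega⟩
  rw [Qdash, partCount, Nat.card_eq_two_iff]
  refine ⟨⟨onePart (4 * a) ha4, hP1⟩, ⟨twoPart a ha0, hP2⟩, ?_, ?_⟩
  · intro h
    have hparts : (onePart (4 * a) ha4).parts = (twoPart a ha0).parts :=
      congrArg (fun q => (Subtype.val q).parts) h
    have h1 : (onePart (4 * a) ha4).parts = {4 * a} := rfl
    have h2 : (twoPart a ha0).parts = {2 * a, 2 * a} := rfl
    rw [h1, h2] at hparts
    have h4mem : (4 * a) ∈ ({2 * a, 2 * a} : Multiset ℕ) := by rw [← hparts]; simp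
    simp at h4mem
    omega
  · ext ⟨p, hp⟩
    simp only [Set.mem_insert_iff, Set.mem_singleton_iff, Set.mem_univ, iff_true]
    rcases key p hp with h | h
    · left
      exact Subtype.ext (Nat.Partition.ext (by rw [h]; rfl))
    · right
      exact Subtype.ext (Nat.Partition.ext (by rw [h]; rfl))

theorem stmt17 (a : ℕ) (ha : 2 ≤ a) :
    (qpart (3 * a - 3) (2 * a) (4 * a) : ℤ) -
      (Qdash (3 * a - 3) (2 * a) (4 * a) : ℤ) = -1 := by
  rw [qpart_eq_one a ha, qdash_eq_two a ha]
  norm_num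
end
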